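/- arXiv:2309.06522 — 7 statements merged into one kernel-verified Lean document; each statement's English description precedes it below -/
import Mathlib

section
/- Let L be a countable relational first-order language and let M be an ultrahomogeneous L-structure. If M has the fixed points on type spaces property (FPT), then M has the externally definable Ramsey property. (Theorem 5.1(1).) -/
open FirstOrder FirstOrder.Language CategoryTheory

universe u v w

namespace EDRP

/-- The colouring `χ` of the copies of `A` in `M` (copies identified with embeddings
`A ↪[L] M`) is externally definable by the formulas `φ i`: there are an elementary extension
`N ⪰ M` and a parameter tuple `ē` in `N` such that `χ(f(ā)) = i` iff `N ⊨ φ i (ē, f(ā))`. -/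
def ExtDefinableBy (L : FirstOrder.Language.{u, v}) (M : Type w) [L.Structure M]
    (A : Type w) [L.Structure A]
    {k e : ℕ} (φ : Fin k → L.Formula (Fin e ⊕ A)) (χ : (A ↪[L] M) → Fin k) : Prop :=
  ∃ (N : Bundled.{w} L.Structure) (emb : M ↪ₑ[L] N) (eb : Fin e → N),
    ∀ (f : A ↪[L] M) (i : Fin k),
      χ f = i ↔ (φ i).Realize (Sum.elim eb fun a => emb (f a))

/-- `χ` is an externally definable `k`-colouring of the copies of `A` in `M`. -/
def ExtDefinable (L : FirstOrder.Language.{u, v}) (M : Type w) [L.Structure M]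
    (A : Type w) [L.Structure A] {k : ℕ} (χ : (A ↪[L] M) → Fin k) : Prop :=
  ∃ (e : ℕ) (φ : Fin k → L.Formula (Fin e ⊕ A)), ExtDefinableBy L M A φ χ

/-- The copy of `B` in `M` given by the embedding `g` is `χ`-monochromatic: `χ` is constant
on the copies of `A` lying inside the image of `g`. -/
def MonochromaticOn (L : FirstOrder.Language.{u, v}) (M : Type w) [L.Structure M]
    (A B : Type w) [L.Structure A] [L.Structure B]
    {k : ℕ} (χ : (A ↪[L] M) → Fin k) (g : B ↪[L] M) : Prop :=
  ∀ f₁ f₂ : A ↪[L] M, Set.range (f₁ : A → M) ⊆ Set.range (g : B → M) →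
    Set.range (f₂ : A → M) ⊆ Set.range (g : B → M) → χ f₁ = χ f₂

/-- `M` has the externally definable `ā`-Ramsey property, where `ā` enumerates `A`:
for every `k ≥ 1`, every `B` in the age of `M` and every externally definable `k`-colouring `χ`
of the copies of `A` in `M`, there is a `χ`-monochromatic copy of `B` in `M`. -/
def ExtDefARamsey (L : FirstOrder.Language.{u, v}) (M : Type w) [L.Structure M]
    (A : Type w) [L.Structure A] : Prop :=
  ∀ (k : ℕ), 1 ≤ k → ∀ (B : Type w) [L.Structure B], Finite B → Nonempty (B ↪[L] M) →
    ∀ χ : (A ↪[L] M) → Fin k, ExtDefinable L M A χ →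
      ∃ g : B ↪[L] M, MonochromaticOn L M A B χ g

/-- `M` has the externally definable Ramsey property. -/
def ExtDefRamsey (L : FirstOrder.Language.{u, v}) (M : Type w) [L.Structure M] : Prop :=
  ∀ (A : Type w) [L.Structure A], Finite A → Nonempty (A ↪[L] M) → ExtDefARamsey L M A

/-- `M` has FPT_n: every complete `n`-type over `M` (represented by a realization `bp` in an
elementary extension `N ⪰ M`) admits an `Aut(M)`-invariant complete `n`-type over `M`
(represented by a realization `bq` in an elementary extension `N' ⪰ M`) lying in the closure of
its `Aut(M)`-orbit, where `φ(x̄, m̄) ∈ tp(b̄/M)` means `φ` is realized by `(b̄, m̄)`. -/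
def FPTn (L : FirstOrder.Language.{u, v}) (M : Type w) [L.Structure M] (n : ℕ) : Prop :=
  ∀ (N : Bundled.{w} L.Structure) (embp : M ↪ₑ[L] N) (bp : Fin n → N),
    ∃ (N' : Bundled.{w} L.Structure) (embq : M ↪ₑ[L] N') (bq : Fin n → N'),
      (∀ (g : M ≃[L] M) (m : ℕ) (φ : L.Formula (Fin n ⊕ Fin m)) (mb : Fin m → M),
        φ.Realize (Sum.elim bq fun j => embq (mb j)) ↔
          φ.Realize (Sum.elim bq fun j => embq (g (mb j)))) ∧
      (∀ (m : ℕ) (φ : L.Formula (Fin n ⊕ Fin m)) (mb : Fin m → M),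
        φ.Realize (Sum.elim bq fun j => embq (mb j)) →
          ∃ g : M ≃[L] M, φ.Realize (Sum.elim bp fun j => embp (g (mb j))))

/-- `M` has the fixed points on type spaces property: `FPT_n` for all `n ≥ 1`. -/
def FPT (L : FirstOrder.Language.{u, v}) (M : Type w) [L.Structure M] : Prop :=
  ∀ n : ℕ, 1 ≤ n → FPTn L M n

/-!
Let `χ(ā') = i` iff `N ⊨ φᵢ(ē, ā')`, and let `p = tp(ē/M)`. FPT gives an `Aut(M)`-invariant type
`q` in the closure of the orbit of `p`. Every automorphic image of `p` contains `⋁ᵢ φᵢ(x̄, g ā)`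
for a fixed copy `ā` of `A`, so `q` contains some `φᵢ(x̄, ā)`, hence, by invariance and
ultrahomogeneity, `φᵢ(x̄, ā')` for every copy `ā'` of `A`. For a copy `b̄` of `B`, `q` then
contains the conjunction of `φᵢ(x̄, ā')` over the finitely many copies `ā'` inside `b̄`; since `q`
is in the orbit closure of `p`, this conjunction lies in `p` over some `g b̄`, which is therefore
monochromatic of colour `i`.
-/

variable {L : FirstOrder.Language.{u, v}} {M : Type w} [L.Structure M]

theorem _root_.FirstOrder.Language.IsUltrahomogeneous.exists_equiv_comp_eq
    (hM : L.IsUltrahomogeneous M) {A : Type*} [L.Structure A] [Finite A] (f₀ f : A ↪[L] M) :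
    ∃ g : M ≃[L] M, g.toEmbedding.comp f₀ = f := by
  obtain ⟨g, hg⟩ := hM f₀.toHom.range (Structure.FG.of_finite.range f₀.toHom)
    (f.comp f₀.equivRange.symm.toEmbedding)
  refine ⟨g, Embedding.ext fun a => ?_⟩
  simpa using (DFunLike.congr_fun hg (f₀.equivRange a)).symm

theorem _root_.FirstOrder.Language.Embedding.exists_comp_eq_of_range_subset {A B : Type*}
    [L.Structure A] [L.Structure B] {g : B ↪[L] M} {f : A ↪[L] M}
    (hfg : Set.range f ⊆ Set.range g) : ∃ u : A ↪[L] B, g.comp u = f :=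
  ⟨g.equivRange.symm.toEmbedding.comp
      (Embedding.codRestrict g.toHom.range f fun a => hfg ⟨a, rfl⟩),
    Embedding.ext fun _ => congrArg Subtype.val (g.equivRange.apply_symm_apply _)⟩

section TypeSpaces

variable {N N' : Type*} [L.Structure N] [L.Structure N'] {n : ℕ}

def IsAutInvariant (embq : M ↪ₑ[L] N') (bq : Fin n → N') : Prop :=
  ∀ (g : M ≃[L] M) (m : ℕ) (φ : L.Formula (Fin n ⊕ Fin m)) (mb : Fin m → M),
    φ.Realize (Sum.elim bq fun j => embq (mb j)) ↔
      φ.Realize (Sum.elim bq fun j => embq (g (mb j)))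

/-- `tp(bq/M)` lies in the closure of the `Aut(M)`-orbit of `tp(bp/M)`. -/
def IsInOrbitClosure (embq : M ↪ₑ[L] N') (bq : Fin n → N') (embp : M ↪ₑ[L] N)
    (bp : Fin n → N) : Prop :=
  ∀ (m : ℕ) (φ : L.Formula (Fin n ⊕ Fin m)) (mb : Fin m → M),
    φ.Realize (Sum.elim bq fun j => embq (mb j)) →
      ∃ g : M ≃[L] M, φ.Realize (Sum.elim bp fun j => embp (g (mb j)))

theorem realize_relabel_sumMap_equiv {α β γ X : Type*} [L.Structure X]
    (φ : L.Formula (α ⊕ β)) (e : β ≃ γ) (a : α → X) (c : β → X) :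
    (φ.relabel (Sum.map id e)).Realize (Sum.elim a (c ∘ e.symm)) ↔ φ.Realize (Sum.elim a c) := by
  rw [Formula.realize_relabel, Sum.elim_comp_map, Function.comp_assoc, Equiv.symm_comp_self]
  rfl

variable {embp : M ↪ₑ[L] N} {embq : M ↪ₑ[L] N'} {bp : Fin n → N} {bq : Fin n → N'}

theorem IsAutInvariant.realize_iff (hq : IsAutInvariant embq bq) (g : M ≃[L] M) {α : Type*}
    [Finite α] (φ : L.Formula (Fin n ⊕ α)) (mb : α → M) :
    φ.Realize (Sum.elim bq (embq ∘ mb)) ↔ φ.Realize (Sum.elim bq (embq ∘ g ∘ mb)) := by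
  let e := Finite.equivFin α
  rw [← realize_relabel_sumMap_equiv φ e, ← realize_relabel_sumMap_equiv φ e]
  exact hq g _ _ (mb ∘ e.symm)

theorem IsInOrbitClosure.exists_realize (hq : IsInOrbitClosure embq bq embp bp) {α : Type*}
    [Finite α] (φ : L.Formula (Fin n ⊕ α)) (mb : α → M)
    (hφ : φ.Realize (Sum.elim bq (embq ∘ mb))) :
    ∃ g : M ≃[L] M, φ.Realize (Sum.elim bp (embp ∘ g ∘ mb)) := by
  let e := Finite.equivFin α
  rw [← realize_relabel_sumMap_equiv φ e] at hφ
  obtain ⟨g, hg⟩ := hq _ _ (mb ∘ e.symm) hφ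
  exact ⟨g, (realize_relabel_sumMap_equiv φ e _ _).1 hg⟩

theorem IsInOrbitClosure.realize_of_forall (hq : IsInOrbitClosure embq bq embp bp) {α : Type*}
    [Finite α] (φ : L.Formula (Fin n ⊕ α)) (mb : α → M)
    (hφ : ∀ g : M ≃[L] M, φ.Realize (Sum.elim bp (embp ∘ g ∘ mb))) :
    φ.Realize (Sum.elim bq (embq ∘ mb)) := by
  by_contra h
  obtain ⟨g, hg⟩ := hq.exists_realize φ.not mb (Formula.realize_not.2 h)
  exact Formula.realize_not.1 hg (hφ g)

end TypeSpaces

/-- The type of the empty tuple is realized in `M`, hence is its own invariant fixed point. -/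
theorem fptn_zero : FPTn L M 0 := by
  intro N embp bp
  refine ⟨N, embp, bp, fun g m φ mb => ?_, fun m φ mb hφ => ⟨.refl L M, hφ⟩⟩
  have hbp : ∀ c : Fin m → M, (Sum.elim bp fun j => embp (c j)) = embp ∘ Sum.elim Fin.elim0 c :=
    fun c => funext fun x => by rcases x with i | j; exacts [i.elim0, rfl]
  rw [hbp, hbp, embp.map_formula, embp.map_formula, ← StrongHomClass.realize_formula g]
  exact iff_of_eq (congrArg _ (funext fun x => by rcases x with i | j; exacts [i.elim0, rfl]))

theorem FPT.fptn (hFPT : FPT L M) (n : ℕ) : FPTn L M n :=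
  n.eq_zero_or_pos.elim (fun hn => hn ▸ fptn_zero) (hFPT n)

section Colourings

variable {N N' : Type*} [L.Structure N] [L.Structure N'] {n : ℕ}
  {embp : M ↪ₑ[L] N} {embq : M ↪ₑ[L] N'} {bp : Fin n → N} {bq : Fin n → N'}
  {A B : Type w} [L.Structure A] [L.Structure B] [Finite A] {k : ℕ}
  {φ : Fin k → L.Formula (Fin n ⊕ A)} {χ : (A ↪[L] M) → Fin k}

theorem exists_forall_realize_colour (hM : L.IsUltrahomogeneous M)
    (hχ : ∀ f i, χ f = i ↔ (φ i).Realize (Sum.elim bp (embp ∘ f)))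
    (hinv : IsAutInvariant embq bq) (hcl : IsInOrbitClosure embq bq embp bp) (f₀ : A ↪[L] M) :
    ∃ i, ∀ f : A ↪[L] M, (φ i).Realize (Sum.elim bq (embq ∘ f)) := by
  have hsup : (Formula.iSup φ).Realize (Sum.elim bq (embq ∘ f₀)) :=
    hcl.realize_of_forall _ _ fun g =>
      Formula.realize_iSup.2 ⟨χ (g.toEmbedding.comp f₀), (hχ _ _).1 rfl⟩
  obtain ⟨i, hi⟩ := Formula.realize_iSup.1 hsup
  refine ⟨i, fun f => ?_⟩
  obtain ⟨g, rfl⟩ := hM.exists_equiv_comp_eq f₀ f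
  exact (hinv.realize_iff g (φ i) f₀).1 hi

theorem exists_monochromaticOn_of_forall_realize [Finite B]
    (hχ : ∀ f i, χ f = i ↔ (φ i).Realize (Sum.elim bp (embp ∘ f)))
    (hcl : IsInOrbitClosure embq bq embp bp) {i : Fin k}
    (hi : ∀ f : A ↪[L] M, (φ i).Realize (Sum.elim bq (embq ∘ f))) (h : B ↪[L] M) :
    ∃ g : B ↪[L] M, MonochromaticOn L M A B χ g := by
  have : Finite (A ↪[L] B) := Finite.of_injective _ Embedding.coe_injective
  let Θ := Formula.iInf fun u : A ↪[L] B => (φ i).relabel (Sum.map id u)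
  have hΘ : Θ.Realize (Sum.elim bq (embq ∘ h)) :=
    Formula.realize_iInf.2 fun u => by
      rw [Formula.realize_relabel, Sum.elim_comp_map]
      exact hi (h.comp u)
  obtain ⟨g, hg⟩ := hcl.exists_realize Θ h hΘ
  have hcol : ∀ f : A ↪[L] M, Set.range f ⊆ Set.range (g.toEmbedding.comp h) → χ f = i := by
    intro f hf
    obtain ⟨u, rfl⟩ := Embedding.exists_comp_eq_of_range_subset hf
    have hu := Formula.realize_iInf.1 hg u
    rw [Formula.realize_relabel, Sum.elim_comp_map] at hu
    exact (hχ _ _).2 hu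
  exact ⟨g.toEmbedding.comp h, fun f₁ f₂ h₁ h₂ => (hcol f₁ h₁).trans (hcol f₂ h₂).symm⟩

end Colourings

theorem fpt_implies_extDefRamsey_general (L : FirstOrder.Language.{u, v})
    (M : Type w) [L.Structure M]
    (hM : L.IsUltrahomogeneous M) (hFPT : FPT L M) :
    ExtDefRamsey L M := by
  intro A _ _ ⟨f₀⟩ k _ B _ _ ⟨h⟩ χ ⟨e, φ, N, emb, eb, hχ⟩
  obtain ⟨N', embq, bq, hinv, hcl⟩ := hFPT.fptn e N emb eb
  obtain ⟨i, hi⟩ := exists_forall_realize_colour hM hχ hinv hcl f₀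
  exact exists_monochromaticOn_of_forall_realize hχ hcl hi h

/-- **Theorem 5.1(1).** If an ultrahomogeneous structure `M` in a countable relational language
has FPT, then `M` has the externally definable Ramsey property. -/
theorem fpt_implies_extDefRamsey (L : FirstOrder.Language.{u, v}) [L.IsRelational]
    [Countable L.Symbols] (M : Type w) [L.Structure M]
    (hM : L.IsUltrahomogeneous M) (hFPT : FPT L M) :
    ExtDefRamsey L M :=
  fpt_implies_extDefRamsey_general L M hM hFPT

end EDRP
end

section
/- Let L be a countable relational language, M an ultrahomogeneous L-structure, ā ∈ Age(M), B ∈ Age(M), k ≥ 1, and let Φ be a FINITE set of L-formulas with free variables among x̄, ȳ (with |ȳ| = |ā|). Then M →_{ext(Φ)} (B)^ā_k if and only if there exists C ∈ Age(M) with C →_{ext(Φ)} (B)^ā_k. (Proposition 3.8, 'Ramsey for the age': the compactness principle for colourings externally defined by a finite set of formulae.) -/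
open FirstOrder FirstOrder.Language CategoryTheory

universe u v w

namespace EDRP

/-- `χ ∈ ext(Φ)`: `χ` is externally definable by some choice of `k` formulas from `Φ`. -/
def ExtPhi (L : FirstOrder.Language.{u, v}) (M : Type w) [L.Structure M]
    (A : Type w) [L.Structure A] {k e : ℕ}
    (Φ : Set (L.Formula (Fin e ⊕ A))) (χ : (A ↪[L] M) → Fin k) : Prop :=
  ∃ φ : Fin k → L.Formula (Fin e ⊕ A), (∀ i, φ i ∈ Φ) ∧ ExtDefinableBy L M A φ χ

lemma pigeon {α β : Type*} (U : Ultrafilter α) {T : Set α} (hT : T ∈ U) {W : Set β}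
    (hW : W.Finite) {v : α → β} (hv : ∀ a ∈ T, v a ∈ W) :
    ∃ b ∈ W, {a | a ∈ T ∧ v a = b} ∈ U := by
  have h : (⋃ b ∈ W, {a | a ∈ T ∧ v a = b}) ∈ U :=
    Filter.mem_of_superset hT fun a ha => Set.mem_biUnion (hv a ha) ⟨ha, rfl⟩
  exact (Ultrafilter.finite_biUnion_mem_iff hW).mp h

lemma emb_finite {L : FirstOrder.Language.{u, v}} {A M : Type w} [L.Structure A] [L.Structure M]
    (hA : Finite A) {s : Set M} (hs : s.Finite) :
    {f : A ↪[L] M | Set.range (f : A → M) ⊆ s}.Finite := by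
  have h1 : {h : A → M | Set.range h ⊆ s}.Finite := by
    refine (Set.Finite.pi fun _ : A => hs).subset ?_
    intro h hh
    rw [Set.mem_univ_pi]
    exact fun a => hh ⟨a, rfl⟩
  refine Set.Finite.of_finite_image (f := fun f : A ↪[L] M => (f : A → M)) (h1.subset ?_) ?_
  · rintro _ ⟨f, hf, rfl⟩; exact hf
  · exact fun f _ g _ h => DFunLike.coe_injective h

lemma ultra_colouring {L : FirstOrder.Language.{u, v}} {M : Type w} [L.Structure M] [Nonempty M]
    {A : Type w} [L.Structure A] {k e : ℕ}
    {ι : Type w} (U : Ultrafilter ι)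
    (N : ι → Bundled.{w} L.Structure) (emb : ∀ s, M ↪ₑ[L] N s) (eb : ∀ s, Fin e → N s)
    (ψ : Fin k → L.Formula (Fin e ⊕ A)) (χs : ι → (A ↪[L] M) → Fin k)
    (hdef : ∀ᶠ s in (U : Filter ι), ∀ (f : A ↪[L] M) (i : Fin k),
      χs s f = i ↔ (ψ i).Realize (Sum.elim (eb s) fun a => emb s (f a)))
    (χ : (A ↪[L] M) → Fin k)
    (hχ : ∀ f, {s | χs s f = χ f} ∈ U) :
    ExtDefinableBy L M A ψ χ := by
  haveI : ∀ s, Nonempty (N s) := fun s => ‹Nonempty M›.map (emb s)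
  have hmf : ∀ ⦃n : ℕ⦄ (ψ' : L.Formula (Fin n)) (x : Fin n → M),
      ψ'.Realize ((fun m => (↑(fun s => emb s m) : (U : Filter ι).Product fun s => (N s : Type w))) ∘ x)
        ↔ ψ'.Realize x := by
    intro n ψ' x
    have h : ((fun m => (↑(fun s => emb s m) : (U : Filter ι).Product fun s => (N s : Type w))) ∘ x)
        = fun i => (↑(fun s => emb s (x i)) : (U : Filter ι).Product fun s => (N s : Type w)) := rfl
    rw [h, Ultraproduct.realize_formula_cast]
    constructor
    · intro hev
      obtain ⟨s, hs⟩ := Filter.nonempty_of_mem hev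
      exact ((emb s).map_formula ψ' x).mp hs
    · intro hx
      exact Filter.Eventually.of_forall fun s => ((emb s).map_formula ψ' x).mpr hx
  have main : ∀ (f : A ↪[L] M) (i : Fin k), χ f = i ↔
      (ψ i).Realize (Sum.elim (fun j => (↑(fun s => eb s j) : (U : Filter ι).Product fun s => (N s : Type w)))
        fun a => (↑(fun s => emb s (f a)) : (U : Filter ι).Product fun s => (N s : Type w))) := by
    intro f i
    have hx : (Sum.elim (fun j => (↑(fun s => eb s j) : (U : Filter ι).Product fun s => (N s : Type w)))
        fun a => (↑(fun s => emb s (f a)) : (U : Filter ι).Product fun s => (N s : Type w)))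
        = fun y => (↑(fun s => Sum.elim (eb s) (fun a => emb s (f a)) y) :
            (U : Filter ι).Product fun s => (N s : Type w)) := by
      funext y; cases y <;> rfl
    rw [hx, Ultraproduct.realize_formula_cast]
    constructor
    · intro hi
      refine Filter.mem_of_superset (Filter.inter_mem (hχ f) hdef) ?_
      rintro s ⟨hs1, hs2⟩
      exact (hs2 f i).mp (hs1.trans hi)
    · intro hev
      have h2 : ∀ᶠ s in (U : Filter ι), χs s f = i := by
        filter_upwards [hev, hdef] with s hs1 hs2
        exact (hs2 f i).mpr hs1
      obtain ⟨s, hs1, hs2⟩ := Filter.nonempty_of_mem (Filter.inter_mem (hχ f) h2)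
      exact hs1.symm.trans hs2
  exact ⟨⟨(U : Filter ι).Product fun s => (N s : Type w), inferInstance⟩,
    ⟨fun m => (↑(fun s => emb s m) : (U : Filter ι).Product fun s => (N s : Type w)), hmf⟩,
    fun j => (↑(fun s => eb s j) : (U : Filter ι).Product fun s => (N s : Type w)),
    fun f i => main f i⟩


/-- **Proposition 3.8.** For an ultrahomogeneous `M`, `ā, B ∈ Age(M)`, `k ≥ 1` and a FINITE
set `Φ` of formulas, `M →_{ext(Φ)} (B)^ā_k` iff there exists `C ∈ Age(M)` with
`C →_{ext(Φ)} (B)^ā_k`. -/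
theorem extPhi_ramsey_iff_age (L : FirstOrder.Language.{u, v}) [L.IsRelational]
    [Countable L.Symbols] (M : Type w) [L.Structure M] (hM : L.IsUltrahomogeneous M)
    (A : Type w) [L.Structure A] (hAfin : Finite A) (hA : Nonempty (A ↪[L] M))
    (B : Type w) [L.Structure B] (hBfin : Finite B) (hB : Nonempty (B ↪[L] M))
    (k e : ℕ) (hk : 1 ≤ k)
    (Φ : Set (L.Formula (Fin e ⊕ A))) (hΦ : Φ.Finite) :
    (∀ χ : (A ↪[L] M) → Fin k, ExtPhi L M A Φ χ →
        ∃ g : B ↪[L] M, MonochromaticOn L M A B χ g) ↔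
      ∃ C : Bundled.{w} L.Structure, Finite C ∧ Nonempty (C ↪[L] M) ∧
        ∀ (c : C ↪[L] M) (χ : (A ↪[L] M) → Fin k), ExtPhi L M A Φ χ →
          ∃ g : B ↪[L] M, Set.range (g : B → M) ⊆ Set.range (c : C → M) ∧
            MonochromaticOn L M A B χ g := by
  classical
  constructor
  · intro hLHS
    by_cases hM0 : Nonempty M
    · by_contra hC
      push_neg at hC
      have key : ∀ s : Finset M, ∃ (N : Bundled.{w} L.Structure) (emb : M ↪ₑ[L] N)
          (eb : Fin e → N) (φ : Fin k → L.Formula (Fin e ⊕ A)) (χ : (A ↪[L] M) → Fin k),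
          (∀ i, φ i ∈ Φ) ∧
          (∀ (f : A ↪[L] M) (i : Fin k),
            χ f = i ↔ (φ i).Realize (Sum.elim eb fun a => emb (f a))) ∧
          (∀ g : B ↪[L] M, Set.range (g : B → M) ⊆ (s : Set M) →
            ¬ MonochromaticOn L M A B χ g) := by
        intro s
        have hSubS : ((Substructure.closure L (s : Set M)) : Set M) = (s : Set M) := by
          rw [Substructure.closure_eq_of_isRelational]
        have hfg : (Substructure.closure L (s : Set M)).FG :=
          Substructure.fg_closure s.finite_toSet
        haveI hfin : Finite (Substructure.closure L (s : Set M)) := hfg.finite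
        obtain ⟨c, χ, hχ, hbad⟩ :=
          hC ⟨Substructure.closure L (s : Set M), inferInstance⟩ hfin
            ⟨(Substructure.closure L (s : Set M)).subtype⟩
        obtain ⟨σ, hσ⟩ := hM _ hfg c
        have hc : ∀ x : Substructure.closure L (s : Set M), c x = σ x := by
          intro x; rw [hσ]; rfl
        obtain ⟨φ, hφΦ, Nb, emb, eb, hdef⟩ := hχ
        refine ⟨Nb, emb.comp σ.toElementaryEmbedding, eb, φ,
          fun f => χ (σ.toEmbedding.comp f), hφΦ, ?_, ?_⟩
        · intro f i
          exact hdef (σ.toEmbedding.comp f) i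
        · intro g hgs hmono
          refine hbad (σ.toEmbedding.comp g) ?_ ?_
          · rintro _ ⟨b, rfl⟩
            have hb : g b ∈ Substructure.closure L (s : Set M) := by
              rw [← SetLike.mem_coe, hSubS]; exact hgs ⟨b, rfl⟩
            refine ⟨⟨g b, hb⟩, ?_⟩
            rw [hc]
            rfl
          · intro f₁ f₂ h₁ h₂
            have r : ∀ f' : A ↪[L] M,
                Set.range (f' : A → M) ⊆ Set.range ((σ.toEmbedding.comp g : B ↪[L] M) : B → M) →
                Set.range ((σ.symm.toEmbedding.comp f' : A ↪[L] M) : A → M) ⊆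
                  Set.range (g : B → M) := by
              rintro f' hf' _ ⟨a, rfl⟩
              obtain ⟨b, hb⟩ := hf' ⟨a, rfl⟩
              refine ⟨b, ?_⟩
              have : f' a = σ (g b) := hb.symm
              simp [Embedding.comp_apply, this]
            have e₁ : σ.toEmbedding.comp (σ.symm.toEmbedding.comp f₁) = f₁ := by
              ext a; simp
            have e₂ : σ.toEmbedding.comp (σ.symm.toEmbedding.comp f₂) = f₂ := by
              ext a; simp
            have hm := hmono _ _ (r f₁ h₁) (r f₂ h₂)
            calc χ f₁ = χ (σ.toEmbedding.comp (σ.symm.toEmbedding.comp f₁)) := by rw [e₁]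
              _ = χ (σ.toEmbedding.comp (σ.symm.toEmbedding.comp f₂)) := hm
              _ = χ f₂ := by rw [e₂]
      choose N emb eb φs χs hmem hdef hbad using key
      let U : Ultrafilter (Finset M) := Ultrafilter.of Filter.atTop
      have hU : (U : Filter (Finset M)) ≤ Filter.atTop := Ultrafilter.of_le _
      have hΦk : {ψ : Fin k → L.Formula (Fin e ⊕ A) | ∀ i, ψ i ∈ Φ}.Finite := by
        refine (Set.Finite.pi fun _ : Fin k => hΦ).subset ?_
        intro ψ hψ
        rw [Set.mem_univ_pi]
        exact hψ
      obtain ⟨ψ, hψΦ, hψU⟩ := pigeon U Filter.univ_mem hΦk fun s _ => hmem s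
      have hex : ∀ f : A ↪[L] M, ∃ i, {s | χs s f = i} ∈ U := by
        intro f
        obtain ⟨i, -, hi⟩ := pigeon U Filter.univ_mem (Set.finite_univ (α := Fin k))
          (v := fun s => χs s f) fun s _ => Set.mem_univ _
        exact ⟨i, by simpa using hi⟩
      obtain ⟨chiL, hchiL⟩ : ∃ chiL : (A ↪[L] M) → Fin k, ∀ f, {s | χs s f = chiL f} ∈ U :=
        ⟨fun f => (hex f).choose, fun f => (hex f).choose_spec⟩
      have hdefU : ∀ᶠ s in (U : Filter (Finset M)), ∀ (f : A ↪[L] M) (i : Fin k),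
          χs s f = i ↔ (ψ i).Realize (Sum.elim (eb s) fun a => emb s (f a)) := by
        refine Filter.mem_of_superset hψU ?_
        rintro s ⟨-, hs⟩ f i
        rw [← hs]
        exact hdef s f i
      have hExt : ExtPhi L M A Φ chiL :=
        ⟨ψ, hψΦ, ultra_colouring U N emb eb ψ χs hdefU chiL hchiL⟩
      obtain ⟨g, hg⟩ := hLHS chiL hExt
      have hrg : (Set.range (g : B → M)).Finite := Set.finite_range _
      have hT : {s : Finset M | hrg.toFinset ≤ s} ∈ U := hU (Filter.mem_atTop hrg.toFinset)
      have hw : ∀ s : Finset M, hrg.toFinset ≤ s →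
          ∃ p : (A ↪[L] M) × (A ↪[L] M),
            (Set.range (p.1 : A → M) ⊆ Set.range (g : B → M) ∧
              Set.range (p.2 : A → M) ⊆ Set.range (g : B → M)) ∧ χs s p.1 ≠ χs s p.2 := by
        intro s hs
        have hgs : Set.range (g : B → M) ⊆ (s : Set M) := by
          intro x hx
          exact hs (hrg.mem_toFinset.mpr hx)
        have hnm := hbad s g hgs
        simp only [MonochromaticOn, not_forall] at hnm
        obtain ⟨f₁, f₂, h₁, h₂, hne⟩ := hnm
        exact ⟨(f₁, f₂), ⟨h₁, h₂⟩, hne⟩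
      choose! w hw1 hw2 using hw
      have Ffin := emb_finite (L := L) (A := A) (M := M) hAfin hrg
      have hWfin : {p : (A ↪[L] M) × (A ↪[L] M) |
          Set.range (p.1 : A → M) ⊆ Set.range (g : B → M) ∧
          Set.range (p.2 : A → M) ⊆ Set.range (g : B → M)}.Finite :=
        (Ffin.prod Ffin).subset fun p hp => ⟨hp.1, hp.2⟩
      obtain ⟨p, hpW, hpU⟩ := pigeon U hT hWfin fun s hs => hw1 s hs
      have hne : chiL p.1 ≠ chiL p.2 := by
        intro heq
        obtain ⟨s, hs⟩ := Filter.nonempty_of_mem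
          (Filter.inter_mem hpU (Filter.inter_mem (hchiL p.1) (hchiL p.2)))
        obtain ⟨⟨hsT, hswp⟩, hs1, hs2⟩ := hs
        have h2 := hw2 s hsT
        rw [hswp] at h2
        exact h2 (by rw [hs1, hs2, heq])
      exact hne (hg p.1 p.2 hpW.1 hpW.2)
    · haveI : IsEmpty M := not_nonempty_iff.mp hM0
      haveI : IsEmpty A := ⟨fun a => IsEmpty.false (hA.some a)⟩
      refine ⟨⟨B, inferInstance⟩, hBfin, hB, fun c χ _ => ⟨c, subset_rfl, ?_⟩⟩
      intro f₁ f₂ _ _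
      have hf : f₁ = f₂ := DFunLike.ext _ _ fun a => isEmptyElim a
      rw [hf]
  · rintro ⟨C, _, ⟨c⟩, h⟩ χ hχ
    obtain ⟨g, -, hmono⟩ := h c χ hχ
    exact ⟨g, hmono⟩


end EDRP
end

section
/- Let L be a countable relational language, M an ultrahomogeneous L-structure, ā ∈ Age(M), and let Φ be a set of L-formulas with free variables among x̄, ȳ (|ȳ| = |ā|). Suppose that for every B ∈ Age(M) and every 2-colouring of Binom(M,ā) that is externally definable by a single formula from Φ, there is a monochromatic copy of B in M. Then the same conclusion holds for every 2-colouring of Binom(M,ā) that is externally definable by a formula that is a Boolean combination of formulas from Φ. (Lemma 3.10.) -/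
open FirstOrder FirstOrder.Language CategoryTheory

universe u v w

namespace EDRP

/-- The 2-colouring `χ` of the copies of `A` in `M` is externally definable by the single
formula `φ`, where colour `0` corresponds to satisfaction of `φ`. -/
def ExtDefinableBy2 (L : FirstOrder.Language.{u, v}) (M : Type w) [L.Structure M]
    (A : Type w) [L.Structure A] {e : ℕ}
    (φ : L.Formula (Fin e ⊕ A)) (χ : (A ↪[L] M) → Fin 2) : Prop :=
  ∃ (N : Bundled.{w} L.Structure) (emb : M ↪ₑ[L] N) (eb : Fin e → N),
    ∀ f : A ↪[L] M, χ f = 0 ↔ φ.Realize (Sum.elim eb fun a => emb (f a))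

/-- Boolean combinations (via `¬` and `∧`) of formulas from `Φ`. -/
inductive BoolComb {L : FirstOrder.Language.{u, v}} {α : Type*}
    (Φ : Set (L.Formula α)) : L.Formula α → Prop
  | base {φ : L.Formula α} : φ ∈ Φ → BoolComb Φ φ
  | not {φ : L.Formula α} : BoolComb Φ φ → BoolComb Φ φ.not
  | inf {φ ψ : L.Formula α} : BoolComb Φ φ → BoolComb Φ ψ → BoolComb Φ (φ ⊓ ψ)

/-!
Induction on the Boolean combination; negation does not change which copies are monochromatic.
For `φ ⊓ ψ`, compactness (an ultraproduct over the finite subsets of `M`) yields a finite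
`s ⊆ M` containing a `φ`-monochromatic copy of `B` for every choice of parameters. By
ultrahomogeneity, a `ψ`-monochromatic copy of `s` is `α(s)` for an automorphism `α` of `M`.
Pulling the parameters of `φ` back along `α` gives a `φ`-monochromatic copy of `B` inside `s`,
whose image under `α` is monochromatic for both formulas.
-/

open Set Filter

variable {L : FirstOrder.Language.{u, v}}

def ultraproductElementaryEmbedding {ι : Type*} (U : Ultrafilter ι) {M : Type*}
    [L.Structure M] {N : ι → Type*} [∀ i, L.Structure (N i)] [∀ i, Nonempty (N i)]
    (embs : ∀ i, M ↪ₑ[L] N i) :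
    M ↪ₑ[L] (U : Filter ι).Product N where
  toFun m := ((fun i => embs i m : ∀ i, N i) : (U : Filter ι).Product N)
  map_formula' n φ x := by
    refine (Ultraproduct.realize_formula_cast φ fun k i => embs i (x k)).trans ?_
    simp only [← Function.comp_apply (f := embs _), ← Function.comp_def, (embs _).map_formula]
    exact eventually_const

theorem Ultrafilter.eventually_iff_of_iff_eventually {ι : Type*} {U : Ultrafilter ι} {p : Prop}
    {q : ι → Prop} (h : p ↔ ∀ᶠ i in U, q i) : ∀ᶠ i in U, q i ↔ p := by
  by_cases hp : p
  · exact (h.1 hp).mono fun i hi => iff_of_true hi hp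
  · exact (Ultrafilter.eventually_not.2 (h.not.1 hp)).mono fun i hi => iff_of_false hi hp

section Colourings

variable {M : Type w} [L.Structure M] {A : Type w} [L.Structure A] {e : ℕ}

def IsMonochromatic (P : (A ↪[L] M) → Prop) (t : Set M) : Prop :=
  ∀ f₁ f₂ : A ↪[L] M, range f₁ ⊆ t → range f₂ ⊆ t → (P f₁ ↔ P f₂)

/-- The colouring externally defined by `φ` with parameters `eb`, as a predicate on the copies
of `A`. -/
def extTrace {N : Type*} [L.Structure N] (φ : L.Formula (Fin e ⊕ A)) (emb : M ↪ₑ[L] N)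
    (eb : Fin e → N) (f : A ↪[L] M) : Prop :=
  φ.Realize (Sum.elim eb fun a => emb (f a))

theorem extTrace_inf {N : Type*} [L.Structure N] (φ ψ : L.Formula (Fin e ⊕ A))
    (emb : M ↪ₑ[L] N) (eb : Fin e → N) :
    extTrace (φ ⊓ ψ) emb eb = fun f => extTrace φ emb eb f ∧ extTrace ψ emb eb f :=
  funext fun _ => propext Formula.realize_inf

def RamseyWithin (φ : L.Formula (Fin e ⊕ A)) (B : Type w) [L.Structure B] (t : Set M) : Prop :=
  ∀ (N : Bundled.{w} L.Structure) (emb : M ↪ₑ[L] N) (eb : Fin e → N),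
    ∃ g : B ↪[L] M, range g ⊆ t ∧ IsMonochromatic (extTrace φ emb eb) (range g)

variable (M) in
def IsRamseyFormula (φ : L.Formula (Fin e ⊕ A)) : Prop :=
  ∀ (B : Type w) [L.Structure B], Finite B → Nonempty (B ↪[L] M) →
    RamseyWithin φ B (univ : Set M)

theorem IsMonochromatic.mono {P : (A ↪[L] M) → Prop} {s t : Set M} (h : IsMonochromatic P t)
    (hst : s ⊆ t) : IsMonochromatic P s :=
  fun f₁ f₂ h₁ h₂ => h f₁ f₂ (h₁.trans hst) (h₂.trans hst)

theorem IsMonochromatic.not {P : (A ↪[L] M) → Prop} {t : Set M} (h : IsMonochromatic P t) :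
    IsMonochromatic (fun f => ¬ P f) t :=
  fun f₁ f₂ h₁ h₂ => not_congr (h f₁ f₂ h₁ h₂)

theorem IsMonochromatic.and {P Q : (A ↪[L] M) → Prop} {t : Set M} (hP : IsMonochromatic P t)
    (hQ : IsMonochromatic Q t) : IsMonochromatic (fun f => P f ∧ Q f) t :=
  fun f₁ f₂ h₁ h₂ => and_congr (hP f₁ f₂ h₁ h₂) (hQ f₁ f₂ h₁ h₂)

theorem IsMonochromatic.image_equiv {P : (A ↪[L] M) → Prop} {t : Set M} (α : M ≃[L] M)
    (h : IsMonochromatic (fun f => P (α.toEmbedding.comp f)) t) :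
    IsMonochromatic P (α '' t) := by
  have hα : ∀ f : A ↪[L] M, α.toEmbedding.comp (α.symm.toEmbedding.comp f) = f := fun f => by
    ext; simp
  have hpull : ∀ f : A ↪[L] M, range f ⊆ α '' t →
      range (α.symm.toEmbedding.comp f) ⊆ t := by
    rintro f hf _ ⟨a, rfl⟩
    obtain ⟨x, hx, hxa⟩ := hf (mem_range_self a)
    simpa [← hxa] using hx
  intro f₁ f₂ h₁ h₂
  simpa only [hα] using h _ _ (hpull f₁ h₁) (hpull f₂ h₂)

theorem finite_setOf_range_subset [Finite A] {t : Set M} (ht : t.Finite) :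
    {f : A ↪[L] M | range f ⊆ t}.Finite := by
  refine ((Set.Finite.pi' fun _ : A => ht).preimage
    (DFunLike.coe_injective.injOn (f := fun f : A ↪[L] M => (f : A → M)))).subset ?_
  rintro f hf a
  exact hf (mem_range_self a)

theorem monochromaticOn_iff {B : Type w} [L.Structure B] {χ : (A ↪[L] M) → Fin 2}
    {g : B ↪[L] M} : MonochromaticOn L M A B χ g ↔ IsMonochromatic (χ · = 0) (range g) := by
  have hfin : ∀ x y : Fin 2, x = y ↔ (x = 0 ↔ y = 0) := by decide
  exact forall₄_congr fun f₁ f₂ _ _ => hfin _ _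

theorem ite_fin_two_eq_zero_iff (p : Prop) [Decidable p] :
    (if p then 0 else 1 : Fin 2) = 0 ↔ p := by
  split_ifs with hp <;> simp [hp]

theorem ramseyWithin_univ_iff {φ : L.Formula (Fin e ⊕ A)} {B : Type w} [L.Structure B] :
    RamseyWithin φ B (univ : Set M) ↔
      ∀ χ, ExtDefinableBy2 L M A φ χ → ∃ g : B ↪[L] M, MonochromaticOn L M A B χ g := by
  classical
  constructor
  · rintro h χ ⟨N, emb, eb, hχ⟩
    obtain ⟨g, -, hg⟩ := h N emb eb
    exact ⟨g, monochromaticOn_iff.2 fun f₁ f₂ h₁ h₂ =>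
      (hχ f₁).trans <| (hg f₁ f₂ h₁ h₂).trans (hχ f₂).symm⟩
  · intro h N emb eb
    obtain ⟨g, hg⟩ := h (fun f => if extTrace φ emb eb f then 0 else 1)
      ⟨N, emb, eb, fun f => ite_fin_two_eq_zero_iff _⟩
    refine ⟨g, subset_univ _, fun f₁ f₂ h₁ h₂ => ?_⟩
    simpa only [ite_fin_two_eq_zero_iff] using monochromaticOn_iff.1 hg f₁ f₂ h₁ h₂

theorem RamseyWithin.not {φ : L.Formula (Fin e ⊕ A)} {B : Type w} [L.Structure B] {t : Set M}
    (h : RamseyWithin φ B t) : RamseyWithin φ.not B t := by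
  intro N emb eb
  obtain ⟨g, hgt, hg⟩ := h N emb eb
  exact ⟨g, hgt, hg.not⟩

theorem extTrace_ultraproduct {ι : Type*} (U : Ultrafilter ι) {N : ι → Type*}
    [∀ i, L.Structure (N i)] [∀ i, Nonempty (N i)] (embs : ∀ i, M ↪ₑ[L] N i)
    (ebs : ∀ i, Fin e → N i) (φ : L.Formula (Fin e ⊕ A)) (f : A ↪[L] M) :
    extTrace φ (ultraproductElementaryEmbedding U embs)
        (fun k => ((fun i => ebs i k : ∀ i, N i) : (U : Filter ι).Product N)) f ↔
      ∀ᶠ i in U, extTrace φ (embs i) (ebs i) f := by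
  have hparams : (Sum.elim (fun k => ((fun i => ebs i k : ∀ i, N i) : (U : Filter ι).Product N))
      fun a => ultraproductElementaryEmbedding U embs (f a)) =
      fun x => ((fun i => Sum.elim (ebs i) (fun a => embs i (f a)) x : ∀ i, N i) :
        (U : Filter ι).Product N) := by
    funext x
    cases x <;> rfl
  exact (Iff.of_eq (congrArg φ.Realize hparams)).trans (Ultraproduct.realize_formula_cast φ _)

theorem RamseyWithin.exists_finset [Finite A] {φ : L.Formula (Fin e ⊕ A)} {B : Type w}
    [L.Structure B] [Finite B] (h : RamseyWithin φ B (univ : Set M)) :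
    ∃ s : Finset M, RamseyWithin φ B (s : Set M) := by
  rcases isEmpty_or_nonempty M with hM | ⟨⟨m⟩⟩
  · refine ⟨∅, fun N emb eb => ?_⟩
    obtain ⟨g, -, hg⟩ := h N emb eb
    exact ⟨g, by simp [eq_empty_of_isEmpty (range g)], hg⟩
  by_contra! hbad
  simp only [RamseyWithin, not_forall, not_exists, not_and] at hbad
  choose N emb eb hbad using hbad
  let U : Ultrafilter (Finset M) := .of atTop
  have : ∀ s, Nonempty (N s) := fun s => ⟨emb s m⟩
  let embU := ultraproductElementaryEmbedding U emb
  let ebU : Fin e → (U : Filter (Finset M)).Product fun s => N s :=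
    fun k => ((fun s => eb s k : ∀ s, N s) : (U : Filter (Finset M)).Product fun s => N s)
  obtain ⟨g, -, hg⟩ := h (Bundled.of ((U : Filter (Finset M)).Product fun s => N s)) embU ebU
  have hagree : ∀ᶠ s in U, ∀ f ∈ {f : A ↪[L] M | range f ⊆ range g},
      extTrace φ (emb s) (eb s) f ↔ extTrace φ embU ebU f :=
    (eventually_all_finite (finite_setOf_range_subset (finite_range g))).2 fun f _ =>
      Ultrafilter.eventually_iff_of_iff_eventually (extTrace_ultraproduct U emb eb φ f)
  have hcover : ∀ᶠ s : Finset M in U, range g ⊆ s :=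
    ((eventually_ge_atTop (finite_range g).toFinset).filter_mono (Ultrafilter.of_le _)).mono
      fun s hs => Finite.toFinset_subset.1 hs
  obtain ⟨s, hs, hgs⟩ := (hagree.and hcover).exists
  exact hbad s g hgs fun f₁ f₂ h₁ h₂ =>
    (hs f₁ h₁).trans ((hg f₁ f₂ h₁ h₂).trans (hs f₂ h₂).symm)

theorem RamseyWithin.inf [L.IsRelational] [Finite A] (hM : L.IsUltrahomogeneous M)
    {φ ψ : L.Formula (Fin e ⊕ A)} {B : Type w} [L.Structure B] [Finite B]
    (hφ : RamseyWithin φ B (univ : Set M)) (hψ : IsRamseyFormula M ψ) :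
    RamseyWithin (φ ⊓ ψ) B (univ : Set M) := by
  obtain ⟨s, hs⟩ := hφ.exists_finset
  let S : L.Substructure M := Substructure.closure L s
  have hS : (S : Set M) = s := Substructure.closure_eq_of_isRelational L _
  have : Finite S := (hS ▸ s.finite_toSet).to_subtype
  intro N emb eb
  obtain ⟨gS, -, hgS⟩ := hψ S inferInstance ⟨S.subtype⟩ N emb eb
  obtain ⟨α, rfl⟩ := hM S (Substructure.fg_closure s.finite_toSet) gS
  obtain ⟨g, hgs, hg⟩ := hs N (emb.comp α.toElementaryEmbedding) eb
  refine ⟨α.toEmbedding.comp g, subset_univ _, ?_⟩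
  have hrange : range (α.toEmbedding.comp g) = α '' range g := range_comp (α : M → M) g
  have hrangeS : range (α.toEmbedding.comp S.subtype) = α '' s := by
    rw [← hS]
    ext x
    simp
  rw [hrange, extTrace_inf]
  exact (IsMonochromatic.image_equiv (P := extTrace φ emb eb) α hg).and
    (hgS.mono (hrangeS ▸ image_mono hgs))

theorem isRamseyFormula_of_boolComb [L.IsRelational] [Finite A] (hM : L.IsUltrahomogeneous M)
    {Φ : Set (L.Formula (Fin e ⊕ A))} (hΦ : ∀ φ ∈ Φ, IsRamseyFormula M φ)
    {ψ : L.Formula (Fin e ⊕ A)} (hψ : BoolComb Φ ψ) : IsRamseyFormula M ψ := by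
  induction hψ with
  | base hφ => exact hΦ _ hφ
  | not _ ih => exact fun B _ hB hBM => (ih B hB hBM).not
  | inf _ _ ih₁ ih₂ => exact fun B _ hB hBM => (ih₁ B hB hBM).inf hM ih₂

end Colourings

theorem boolComb_ramsey_general (L : FirstOrder.Language.{u, v}) [L.IsRelational]
    (M : Type w) [L.Structure M] (hM : L.IsUltrahomogeneous M)
    (A : Type w) [L.Structure A] (hAfin : Finite A)
    (e : ℕ) (Φ : Set (L.Formula (Fin e ⊕ A)))
    (h : ∀ (B : Type w) [L.Structure B], Finite B → Nonempty (B ↪[L] M) →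
      ∀ χ : (A ↪[L] M) → Fin 2, (∃ φ ∈ Φ, ExtDefinableBy2 L M A φ χ) →
        ∃ g : B ↪[L] M, MonochromaticOn L M A B χ g) :
    ∀ (B : Type w) [L.Structure B], Finite B → Nonempty (B ↪[L] M) →
      ∀ χ : (A ↪[L] M) → Fin 2, (∃ ψ, BoolComb Φ ψ ∧ ExtDefinableBy2 L M A ψ χ) →
        ∃ g : B ↪[L] M, MonochromaticOn L M A B χ g := by
  have hΦ : ∀ φ ∈ Φ, IsRamseyFormula M φ := fun φ hφ B _ hB hBM =>
    ramseyWithin_univ_iff.2 fun χ hχ => h B hB hBM χ ⟨φ, hφ, hχ⟩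
  rintro B _ hB hBM χ ⟨ψ, hψ, hχ⟩
  exact ramseyWithin_univ_iff.1 (isRamseyFormula_of_boolComb hM hΦ hψ B hB hBM) χ hχ

/-- **Lemma 3.10.** If an ultrahomogeneous `M` has the `ā`-Ramsey property for all 2-colourings
externally defined by a formula from `Φ`, then it has the `ā`-Ramsey property for all
2-colourings externally defined by a Boolean combination of formulas from `Φ`. -/
theorem boolComb_ramsey (L : FirstOrder.Language.{u, v}) [L.IsRelational]
    [Countable L.Symbols] (M : Type w) [L.Structure M] (hM : L.IsUltrahomogeneous M)
    (A : Type w) [L.Structure A] (hAfin : Finite A) (hA : Nonempty (A ↪[L] M))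
    (e : ℕ) (Φ : Set (L.Formula (Fin e ⊕ A)))
    (h : ∀ (B : Type w) [L.Structure B], Finite B → Nonempty (B ↪[L] M) →
      ∀ χ : (A ↪[L] M) → Fin 2, (∃ φ ∈ Φ, ExtDefinableBy2 L M A φ χ) →
        ∃ g : B ↪[L] M, MonochromaticOn L M A B χ g) :
    ∀ (B : Type w) [L.Structure B], Finite B → Nonempty (B ↪[L] M) →
      ∀ χ : (A ↪[L] M) → Fin 2, (∃ ψ, BoolComb Φ ψ ∧ ExtDefinableBy2 L M A ψ χ) →
        ∃ g : B ↪[L] M, MonochromaticOn L M A B χ g :=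
  boolComb_ramsey_general L M hM A hAfin e Φ h

end EDRP
end

section
/- Let L be a countable relational language in which every relation symbol has arity at most t, where t ≥ 2. Let M be an ultrahomogeneous L-structure such that Th(M) has quantifier elimination. If M has the externally definable ā-Ramsey property for every ā ∈ Age(M) with |ā| < t, then M has the externally definable Ramsey property. (Lemma 3.14.) -/
/-!
By quantifier elimination each colour class of `χ` is cut out by a quantifier-free formula
`ψ(ē, x̄)`, whose truth only depends on the atomic facts about `(ē, x̄)`. An atomic fact that
mentions a parameter mentions fewer than `t` elements of `x̄` (for an equality `eᵢ = xⱼ` this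
uses `t ≥ 2`), and one that mentions no parameter holds for all copies of `A` alike. So it
suffices to move `ē` until, for every `S ⊆ A` with `|S| < t`, the atomic type of `ē` over a copy
of `S` does not depend on the copy.

For a single `S`, the Ramsey property of `S` on larger and larger finite windows `F ⊆ M`,
transported by ultrahomogeneity, gives automorphisms `g_F` making that type constant on copies
inside `F`; the ultralimit of `ē` over the twisted copies `g_F(M)` makes it constant everywhere.
The new type over `M` lies in the closure of the `Aut(M)`-orbit of the old one, so constancy
already achieved survives, and finitely many steps treat all small `S`. Finally a finite part of
the limit type is realized by `ē` over some `g(M)`, and `g` moves a given copy of `B` to a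
monochromatic one.
-/

open FirstOrder FirstOrder.Language CategoryTheory

universe u v w

namespace EDRP

/-- `Th(M)` has quantifier elimination: every formula is equivalent modulo the complete theory
of `M` to a quantifier-free formula. -/
def HasQE (L : FirstOrder.Language.{u, v}) (M : Type w) [L.Structure M] : Prop :=
  ∀ (n : ℕ) (φ : L.Formula (Fin n)), ∃ ψ : L.Formula (Fin n),
    ψ.IsQF ∧ FirstOrder.Language.Theory.Iff (L.completeTheory M) φ ψ

open Filter

variable {L : FirstOrder.Language.{u, v}}

section Atoms

variable {β : Type*}

def relSymbols : ∀ {n : ℕ}, L.BoundedFormula β n → Set (Σ k, L.Relations k)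
  | _, .falsum => ∅
  | _, .equal _ _ => ∅
  | _, .rel R _ => {⟨_, R⟩}
  | _, .imp φ ψ => relSymbols φ ∪ relSymbols ψ
  | _, .all φ => relSymbols φ

lemma finite_relSymbols {n : ℕ} (φ : L.BoundedFormula β n) : (relSymbols φ).Finite := by
  induction φ with
  | falsum | equal => exact Set.finite_empty
  | rel => exact Set.finite_singleton _
  | imp _ _ ih₁ ih₂ => exact ih₁.union ih₂
  | all _ ih => exact ih

variable (R : Set (Σ n, L.Relations n))

/-- Atomic formulas with relation symbols from `R` are indexed by a symbol `p : Option R`, where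
`none` stands for equality (of arity 2), and a tuple of variables. -/
abbrev symbolArity : Option R → ℕ
  | none => 2
  | some p => p.1.1

abbrev AtomIndex (β : Type*) : Type _ := Σ p : Option R, Fin (symbolArity R p) → β

def atom : AtomIndex R β → L.Formula β
  | ⟨none, xs⟩ => Term.equal (var (xs 0)) (var (xs 1))
  | ⟨some p, xs⟩ => p.1.2.formula fun i => var (xs i)

lemma realize_atom_comp {γ W : Type*} [L.Structure W] (p : Option R)
    (xs : Fin (symbolArity R p) → γ) (g : γ → β) (v : β → W) :
    (atom R ⟨p, g ∘ xs⟩).Realize v ↔ (atom R ⟨p, xs⟩).Realize (v ∘ g) := by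
  cases p <;> simp [atom, Function.comp_def]

lemma realize_atom_embedding {W W' : Type*} [L.Structure W] [L.Structure W'] (f : W ↪[L] W')
    (a : AtomIndex R β) (v : β → W) :
    (atom R a).Realize (f ∘ v) ↔ (atom R a).Realize v := by
  obtain ⟨_ | p, xs⟩ := a
  · simp [atom]
  · simp only [atom, Formula.realize_rel, Term.realize_var]
    exact f.map_rel p.1.2 (v ∘ xs)

variable {R}

lemma symbolArity_le {t : ℕ} (ht : 2 ≤ t) (harity : ∀ n, t < n → IsEmpty (L.Relations n))
    (p : Option R) : symbolArity R p ≤ t := by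
  rcases p with _ | ⟨⟨n, r⟩, -⟩
  · exact ht
  · exact not_lt.1 fun hn => (harity n hn).elim r

lemma term_eq_var_inl [L.IsRelational] (τ : L.Term (β ⊕ Fin 0)) : ∃ x, τ = var (Sum.inl x) := by
  rcases τ with (x | i) | ⟨f, _⟩
  · exact ⟨x, rfl⟩
  · exact i.elim0
  · exact isEmptyElim f

lemma realize_iff_of_realize_atom_iff [L.IsRelational] {θ : L.Formula β} (hθ : θ.IsQF)
    (hR : relSymbols θ ⊆ R) {W : Type*} [L.Structure W] {v₁ v₂ : β → W}
    (h : ∀ a, (atom R a).Realize v₁ ↔ (atom R a).Realize v₂) :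
    θ.Realize v₁ ↔ θ.Realize v₂ := by
  induction hθ with
  | falsum => exact Iff.rfl
  | of_isAtomic hat =>
    cases hat with
    | equal τ₁ τ₂ =>
      obtain ⟨x, rfl⟩ := term_eq_var_inl τ₁
      obtain ⟨y, rfl⟩ := term_eq_var_inl τ₂
      have hxy := h ⟨none, ![x, y]⟩
      simp only [atom, Formula.realize_equal, Term.realize_var] at hxy
      simpa [Formula.Realize] using hxy
    | rel r τs =>
      choose xs hxs using fun i => term_eq_var_inl (τs i)
      obtain rfl : τs = fun i => var (Sum.inl (xs i)) := funext hxs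
      have hxs := h ⟨some ⟨_, hR rfl⟩, xs⟩
      simp only [atom, Formula.realize_rel, Term.realize_var] at hxs
      simpa [Formula.Realize] using hxs
  | imp _ _ ih₁ ih₂ =>
    simp only [relSymbols, Set.union_subset_iff] at hR
    simp only [Formula.Realize, BoundedFormula.realize_imp] at ih₁ ih₂ ⊢
    rw [ih₁ hR.1, ih₂ hR.2]

end Atoms

lemma HasQE.exists_isQF_realize_iff {M : Type w} [L.Structure M] (hQE : HasQE L M)
    {β : Type*} [Finite β] (φ : L.Formula β) (N : Type*) [L.Structure N] [Nonempty N]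
    [N ⊨ L.completeTheory M] :
    ∃ ψ : L.Formula β, ψ.IsQF ∧ ∀ v : β → N, φ.Realize v ↔ ψ.Realize v := by
  let E := Finite.equivFin β
  obtain ⟨ψ, hψ, hφψ⟩ := hQE _ (φ.relabel E)
  refine ⟨ψ.relabel E.symm, hψ.relabel _, fun v => ?_⟩
  simpa [Formula.realize_relabel, Function.comp_assoc] using hφψ.realize_iff (v := v ∘ E.symm)

lemma _root_.Ultrafilter.eventually_iff_eventually {J : Type*} (U : Ultrafilter J)
    {p : J → Prop} : ∀ᶠ j in U, (p j ↔ ∀ᶠ j' in U, p j') := by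
  by_cases hp : ∀ᶠ j in U, p j
  · exact hp.mono fun j hj => iff_of_true hj hp
  · exact (U.eventually_not.2 hp).mono fun j hj => iff_of_false hj hp

/-- An `e`-tuple `ē` in an elementary extension of `M`, standing for its type over `M`. -/
structure ExtTuple (L : FirstOrder.Language.{u, v}) (M : Type w) [L.Structure M] (e : ℕ) where
  N : Bundled.{w} L.Structure
  emb : M ↪ₑ[L] N
  eb : Fin e → N

namespace ExtTuple

variable {M : Type w} [L.Structure M] {e : ℕ}

instance [Nonempty M] (s : ExtTuple L M e) : Nonempty s.N := ⟨s.emb (Classical.arbitrary M)⟩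

def colour (s : ExtTuple L M e) {γ ι : Type*} (Φ : ι → L.Formula (Fin e ⊕ γ)) (u : γ → M) :
    ι → Prop :=
  fun i => (Φ i).Realize (Sum.elim s.eb fun a => s.emb (u a))

def ColourConst (s : ExtTuple L M e) {γ ι : Type*} [L.Structure γ]
    (Φ : ι → L.Formula (Fin e ⊕ γ)) : Prop :=
  ∀ u₁ u₂ : γ ↪[L] M, s.colour Φ u₁ = s.colour Φ u₂

open Classical in
lemma extDefinable_colour (s : ExtTuple L M e) {γ : Type w} {ι : Type*} [L.Structure γ]
    [Finite ι] (Φ : ι → L.Formula (Fin e ⊕ γ)) :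
    ExtDefinable L M γ fun u : γ ↪[L] M => Finite.equivFin (ι → Prop) (s.colour Φ u) := by
  refine ⟨e, fun c => Formula.iInf fun i =>
    if (Finite.equivFin (ι → Prop)).symm c i then Φ i else (Φ i).not, s.N, s.emb, s.eb,
    fun u c => ?_⟩
  rw [← Equiv.eq_symm_apply, Formula.realize_iInf, funext_iff]
  refine forall_congr' fun i => ?_
  by_cases hc : (Finite.equivFin (ι → Prop)).symm c i <;> simp [colour, hc]

/-- `s'` lies in the closure of the `Aut(M)`-orbit of `s`, the tuples being viewed as types
over `M`: each finite part of the type of `ē'` over `M` is realized by `ē` over some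
automorphic image of `M`. -/
def MemOrbitClosure (s' s : ExtTuple L M e) : Prop :=
  ∀ Ψ : Set (L.Formula (Fin e ⊕ M)), Ψ.Finite → ∃ g : M ≃[L] M, ∀ φ ∈ Ψ,
    (φ.Realize (Sum.elim s.eb fun x => s.emb (g x)) ↔ φ.Realize (Sum.elim s'.eb s'.emb))

namespace MemOrbitClosure

variable {s s' s'' : ExtTuple L M e}

lemma refl (s : ExtTuple L M e) : s.MemOrbitClosure s :=
  fun _ _ => ⟨.refl L M, fun _ _ => Iff.rfl⟩

lemma trans (h₁ : s'.MemOrbitClosure s) (h₂ : s''.MemOrbitClosure s') :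
    s''.MemOrbitClosure s := by
  intro Ψ hΨ
  obtain ⟨g₂, hg₂⟩ := h₂ Ψ hΨ
  obtain ⟨g₁, hg₁⟩ := h₁ ((·.relabel (Sum.map id g₂)) '' Ψ) (hΨ.image _)
  refine ⟨g₁.comp g₂, fun φ hφ => ?_⟩
  have h := hg₁ _ ⟨φ, hφ, rfl⟩
  simp only [Formula.realize_relabel, Sum.elim_comp_map] at h
  exact h.trans (hg₂ φ hφ)

lemma exists_colour_eq (h : s'.MemOrbitClosure s) {γ ι : Type*} [Finite ι]
    (Φ : ι → L.Formula (Fin e ⊕ γ)) {U : Set (γ → M)} (hU : U.Finite) :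
    ∃ g : M ≃[L] M, ∀ u ∈ U, s.colour Φ (g ∘ u) = s'.colour Φ u := by
  obtain ⟨g, hg⟩ := h ((fun p : ι × (γ → M) => (Φ p.1).relabel (Sum.map id p.2)) ''
    (Set.univ ×ˢ U)) ((Set.finite_univ.prod hU).image _)
  refine ⟨g, fun u hu => funext fun i => propext ?_⟩
  have h := hg _ ⟨(i, u), ⟨trivial, hu⟩, rfl⟩
  simp only [Formula.realize_relabel, Sum.elim_comp_map] at h
  exact h

lemma colourConst (h : s'.MemOrbitClosure s) {γ ι : Type*} [L.Structure γ] [Finite ι]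
    {Φ : ι → L.Formula (Fin e ⊕ γ)} (hs : s.ColourConst Φ) : s'.ColourConst Φ := by
  intro u₁ u₂
  obtain ⟨g, hg⟩ := h.exists_colour_eq Φ (Set.toFinite {⇑u₁, ⇑u₂})
  rw [← hg u₁ (by simp), ← hg u₂ (by simp)]
  exact hs (g.toEmbedding.comp u₁) (g.toEmbedding.comp u₂)

lemma exists_equiv_colour_eq_of_colourConst (h : s'.MemOrbitClosure s) {γ : Type*}
    [L.Structure γ] [Finite γ] {ι : Type*} [Finite ι] {Φ : ι → L.Formula (Fin e ⊕ γ)}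
    (hc : s'.ColourConst Φ) {B : Type*} [L.Structure B] [Finite B] (gB : B ↪[L] M) :
    ∃ g : M ≃[L] M, ∀ f₁ f₂ : γ ↪[L] M, Set.range f₁ ⊆ Set.range (g.toEmbedding.comp gB) →
      Set.range f₂ ⊆ Set.range (g.toEmbedding.comp gB) → s.colour Φ f₁ = s.colour Φ f₂ := by
  obtain ⟨g, hg⟩ := h.exists_colour_eq Φ (Set.Finite.pi (t := fun _ : γ => Set.range gB)
    fun _ => Set.finite_range gB)
  have hpull (f : γ ↪[L] M) (hf : Set.range f ⊆ Set.range (g.toEmbedding.comp gB)) :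
      s.colour Φ f = s'.colour Φ (g.symm.toEmbedding.comp f) := by
    rw [← hg]
    · congr 1
      funext a
      simp
    · intro a _
      obtain ⟨b, hb⟩ := hf ⟨a, rfl⟩
      exact ⟨b, by simp [← hb]⟩
  refine ⟨g, fun f₁ f₂ h₁ h₂ => ?_⟩
  rw [hpull f₁ h₁, hpull f₂ h₂]
  exact hc _ _

end MemOrbitClosure

section Ultralimit

variable [Nonempty M] (s : ExtTuple L M e) {J : Type w} (U : Ultrafilter J) (g : J → M ≃[L] M)

/-- The ultralimit along `U` of the tuples `ē` over the twisted copies `g j (M)` of `M`. -/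
def ultralimit : ExtTuple L M e where
  N := Bundled.of ((U : Filter J).Product fun _ => s.N)
  emb :=
    { toFun := fun x => (↑(fun j => s.emb (g j x)) : (U : Filter J).Product fun _ => s.N)
      map_formula' := fun n φ x => by
        change φ.Realize (fun i =>
          (↑(fun j => s.emb (g j (x i))) : (U : Filter J).Product fun _ => s.N)) ↔ φ.Realize x
        have hφ (j : J) : φ.Realize (fun i => s.emb (g j (x i))) ↔ φ.Realize x :=
          (s.emb.map_formula φ (g j ∘ x)).trans ((g j).toElementaryEmbedding.map_formula φ x)
        simp only [Ultraproduct.realize_formula_cast, hφ, eventually_const] }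
  eb i := (↑(fun _ : J => s.eb i) : (U : Filter J).Product fun _ => s.N)

lemma realize_ultralimit {γ : Type*} (φ : L.Formula (Fin e ⊕ γ)) (u : γ → M) :
    φ.Realize (Sum.elim (s.ultralimit U g).eb fun a => (s.ultralimit U g).emb (u a)) ↔
      ∀ᶠ j in U, φ.Realize (Sum.elim s.eb fun a => s.emb (g j (u a))) := by
  have hval : (Sum.elim (s.ultralimit U g).eb fun a => (s.ultralimit U g).emb (u a)) =
      fun z => (↑(fun j => Sum.elim s.eb (fun a => s.emb (g j (u a))) z) :
        (U : Filter J).Product fun _ => s.N) := by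
    funext z
    cases z <;> rfl
  exact (congrArg φ.Realize hval).to_iff.trans (Ultraproduct.realize_formula_cast φ _)

lemma memOrbitClosure_ultralimit : (s.ultralimit U g).MemOrbitClosure s := by
  intro Ψ hΨ
  have hev : ∀ᶠ j in U, ∀ φ ∈ Ψ, (φ.Realize (Sum.elim s.eb fun x => s.emb (g j x)) ↔
      φ.Realize (Sum.elim (s.ultralimit U g).eb (s.ultralimit U g).emb)) :=
    (eventually_all_finite hΨ).2 fun φ _ =>
      (U.eventually_iff_eventually
        (p := fun j => φ.Realize (Sum.elim s.eb fun x => s.emb (g j x)))).mono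
        fun _ hj => hj.trans (realize_ultralimit s U g φ id).symm
  obtain ⟨j, hj⟩ := hev.exists
  exact ⟨g j, hj⟩

lemma eventually_colour_eq {γ ι : Type*} [Finite ι] (Φ : ι → L.Formula (Fin e ⊕ γ))
    (u : γ → M) : ∀ᶠ j in U, s.colour Φ (g j ∘ u) = (s.ultralimit U g).colour Φ u := by
  have hev : ∀ᶠ j in U, ∀ i, s.colour Φ (g j ∘ u) i ↔ (s.ultralimit U g).colour Φ u i :=
    eventually_all.2 fun i =>
      (U.eventually_iff_eventually (p := fun j => s.colour Φ (g j ∘ u) i)).mono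
        fun _ hj => hj.trans (realize_ultralimit s U g (Φ i) u).symm
  exact hev.mono fun j hj => funext fun i => propext (hj i)

end Ultralimit

section Ramsey

variable [L.IsRelational]

lemma exists_equiv_colour_eq_of_range_subset (hM : L.IsUltrahomogeneous M) {γ : Type w}
    [L.Structure γ] (hR : ExtDefARamsey L M γ) (s : ExtTuple L M e) {ι : Type*} [Finite ι]
    (Φ : ι → L.Formula (Fin e ⊕ γ)) {F : Set M} (hF : F.Finite) :
    ∃ g : M ≃[L] M, ∀ u₁ u₂ : γ ↪[L] M, Set.range u₁ ⊆ F → Set.range u₂ ⊆ F →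
      s.colour Φ (g ∘ u₁) = s.colour Φ (g ∘ u₂) := by
  let B := Substructure.closure L F
  have hBF : (B : Set M) = F := Substructure.closure_eq_of_isRelational L F
  have : Finite B := (hBF ▸ hF).to_subtype
  obtain ⟨gB, hgB⟩ := hR _ Nat.card_pos B this ⟨B.subtype⟩ _ (s.extDefinable_colour Φ)
  obtain ⟨g, rfl⟩ := hM B (Substructure.fg_closure hF) gB
  have hrange (u : γ ↪[L] M) (hu : Set.range u ⊆ F) :
      Set.range (g.toEmbedding.comp u) ⊆ Set.range (g.toEmbedding.comp B.subtype) := by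
    rintro _ ⟨a, rfl⟩
    exact ⟨⟨u a, by rw [← SetLike.mem_coe, hBF]; exact hu ⟨a, rfl⟩⟩, rfl⟩
  exact ⟨g, fun u₁ u₂ h₁ h₂ =>
    (Finite.equivFin _).injective (hgB _ _ (hrange u₁ h₁) (hrange u₂ h₂))⟩

variable [Nonempty M]

lemma exists_memOrbitClosure_colourConst (hM : L.IsUltrahomogeneous M) {γ : Type w}
    [L.Structure γ] [Finite γ] (hR : ExtDefARamsey L M γ) (s : ExtTuple L M e) {ι : Type*}
    [Finite ι] (Φ : ι → L.Formula (Fin e ⊕ γ)) :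
    ∃ s' : ExtTuple L M e, s'.MemOrbitClosure s ∧ s'.ColourConst Φ := by
  choose g hg using fun F : Finset M =>
    s.exists_equiv_colour_eq_of_range_subset hM hR Φ F.finite_toSet
  let U := Ultrafilter.of (atTop : Filter (Finset M))
  refine ⟨s.ultralimit U g, s.memOrbitClosure_ultralimit U g, fun u₁ u₂ => ?_⟩
  have hfin := (Set.finite_range u₁).union (Set.finite_range u₂)
  have hwin : ∀ᶠ F : Finset M in U, Set.range u₁ ∪ Set.range u₂ ⊆ F :=
    Ultrafilter.of_le _ ((eventually_ge_atTop hfin.toFinset).mono fun _ hF =>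
      Set.Finite.toFinset_subset.1 hF)
  obtain ⟨F, h₁, h₂, hF⟩ := ((s.eventually_colour_eq U g Φ u₁).and
    ((s.eventually_colour_eq U g Φ u₂).and hwin)).exists
  rw [← h₁, ← h₂]
  exact hg F u₁ u₂ (Set.subset_union_left.trans hF) (Set.subset_union_right.trans hF)

lemma exists_memOrbitClosure_forall_colourConst (hM : L.IsUltrahomogeneous M) {κ : Type*}
    [Finite κ] {γ : κ → Type w} [∀ j, L.Structure (γ j)] [∀ j, Finite (γ j)]
    (hR : ∀ j, ExtDefARamsey L M (γ j)) (s : ExtTuple L M e) {ι : κ → Type*}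
    [∀ j, Finite (ι j)] (Φ : ∀ j, ι j → L.Formula (Fin e ⊕ γ j)) :
    ∃ s' : ExtTuple L M e, s'.MemOrbitClosure s ∧ ∀ j, s'.ColourConst (Φ j) := by
  classical
  have : Fintype κ := Fintype.ofFinite κ
  suffices ∀ T : Finset κ, ∃ s' : ExtTuple L M e, s'.MemOrbitClosure s ∧
      ∀ j ∈ T, s'.ColourConst (Φ j) by
    simpa using this Finset.univ
  intro T
  induction T using Finset.induction_on with
  | empty => exact ⟨s, .refl s, by simp⟩
  | insert j T _ ih =>
    obtain ⟨s₁, hs₁, hT⟩ := ih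
    obtain ⟨s₂, hs₂, hj⟩ := s₁.exists_memOrbitClosure_colourConst hM (hR j) (Φ j)
    exact ⟨s₂, hs₁.trans hs₂, Finset.forall_mem_insert _ _ _ |>.2
      ⟨hj, fun i hi => hs₂.colourConst (hT i hi)⟩⟩

end Ramsey

end ExtTuple

lemma realize_atom_iff_of_colourConst [L.IsRelational] {t : ℕ} (ht : 2 ≤ t)
    (harity : ∀ n, t < n → IsEmpty (L.Relations n)) {M : Type w} [L.Structure M] {e : ℕ}
    (s : ExtTuple L M e) {A : Type w} [L.Structure A] {R : Set (Σ n, L.Relations n)}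
    (hconst : ∀ S : L.Substructure A, Nat.card S < t → s.ColourConst (atom (β := Fin e ⊕ S) R))
    (f₁ f₂ : A ↪[L] M) (a : AtomIndex R (Fin e ⊕ A)) :
    (atom R a).Realize (Sum.elim s.eb fun x => s.emb (f₁ x)) ↔
      (atom R a).Realize (Sum.elim s.eb fun x => s.emb (f₂ x)) := by
  obtain ⟨p, xs⟩ := a
  by_cases hpar : ∃ i c, xs i = Sum.inl c
  · obtain ⟨i, c, hc⟩ := hpar
    let S := Substructure.closure L (Sum.inr ⁻¹' Set.range xs)
    have hS : (S : Set A) = Sum.inr ⁻¹' Set.range xs :=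
      Substructure.closure_eq_of_isRelational L _
    have hcard : Nat.card S < t := by
      have hsub : Sum.inr '' (S : Set A) ⊂ Set.range xs := by
        rw [hS]
        refine (Set.ssubset_iff_of_subset (Set.image_preimage_subset _ _)).2
          ⟨_, ⟨i, hc⟩, fun ⟨_, _, h⟩ => Sum.inr_ne_inl h⟩
      calc Nat.card S = (Sum.inr '' (S : Set A)).ncard :=
            (Nat.card_coe_set_eq _).trans
              (Set.ncard_image_of_injective _ Sum.inr_injective).symm
        _ < (Set.range xs).ncard := Set.ncard_lt_ncard hsub
        _ ≤ symbolArity R p := by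
          simpa [Nat.card_coe_set_eq] using Finite.card_range_le xs
        _ ≤ t := symbolArity_le ht harity p
    have hfactor (j) : ∃ z : Fin e ⊕ S, Sum.map id S.subtype z = xs j := by
      rcases hxs : xs j with d | a
      · exact ⟨Sum.inl d, rfl⟩
      · exact ⟨Sum.inr ⟨a, by rw [← SetLike.mem_coe, hS]; exact ⟨j, hxs⟩⟩, rfl⟩
    choose ys hys using hfactor
    rw [← show Sum.map id S.subtype ∘ ys = xs from funext hys, realize_atom_comp,
      realize_atom_comp, Sum.elim_comp_map, Sum.elim_comp_map]
    exact Iff.of_eq (congrFun (hconst S hcard (f₁.comp S.subtype) (f₂.comp S.subtype)) ⟨p, ys⟩)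
  · have hA (i) : ∃ a, Sum.inr a = xs i := by
      rcases hxs : xs i with c | a
      · exact (hpar ⟨i, c, hxs⟩).elim
      · exact ⟨a, rfl⟩
    choose σ hσ using hA
    obtain rfl : Sum.inr ∘ σ = xs := funext hσ
    rw [realize_atom_comp, realize_atom_comp, Sum.elim_comp_inr, Sum.elim_comp_inr]
    exact (realize_atom_embedding R (s.emb.toEmbedding.comp f₁) _ id).trans
      (realize_atom_embedding R (s.emb.toEmbedding.comp f₂) _ id).symm

theorem extDefRamsey_of_small_general (L : FirstOrder.Language.{u, v}) [L.IsRelational]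
    (t : ℕ) (ht : 2 ≤ t)
    (harity : ∀ n : ℕ, t < n → IsEmpty (L.Relations n))
    (M : Type w) [L.Structure M] (hM : L.IsUltrahomogeneous M) (hQE : HasQE L M)
    (h : ∀ (A : Type w) [L.Structure A], Finite A → Nat.card A < t →
      Nonempty (A ↪[L] M) → ExtDefARamsey L M A) :
    ExtDefRamsey L M := by
  intro A _ _ ⟨f₀⟩
  by_cases hsmall : Nat.card A < t
  · exact h A ‹_› hsmall ⟨f₀⟩
  intro k _ B _ _ ⟨gB⟩ χ ⟨e, φ, N, emb, eb, hχ⟩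
  have : Nonempty A := (Nat.card_pos_iff.1 (by omega)).1
  have : Nonempty M := ⟨f₀ (Classical.arbitrary A)⟩
  have : Nonempty N := ⟨emb (Classical.arbitrary M)⟩
  have : N ⊨ L.completeTheory M := (emb.theory_model_iff _).1 inferInstance
  choose ψ hψQF hφψ using fun i => hQE.exists_isQF_realize_iff (φ i) N
  let R := ⋃ i, relSymbols (ψ i)
  have : Finite R := (Set.finite_iUnion fun i => finite_relSymbols (ψ i)).to_subtype
  let s : ExtTuple L M e := ⟨N, emb, eb⟩
  obtain ⟨s', hs', hconst⟩ := s.exists_memOrbitClosure_forall_colourConst hM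
    (γ := fun S : {S : L.Substructure A // Nat.card S < t} => S.1)
    (fun S => h S.1 inferInstance S.2 ⟨f₀.comp S.1.subtype⟩)
    (fun S => atom (β := Fin e ⊕ S.1) R)
  have hψ : s'.ColourConst ψ := fun f₁ f₂ => funext fun i => propext <|
    realize_iff_of_realize_atom_iff (hψQF i) (Set.subset_iUnion (fun i => relSymbols (ψ i)) i)
      (realize_atom_iff_of_colourConst ht harity s' (fun S hS => hconst ⟨S, hS⟩) f₁ f₂)
  obtain ⟨g, hg⟩ := hs'.exists_equiv_colour_eq_of_colourConst hψ gB
  have hχψ (f : A ↪[L] M) (i) : χ f = i ↔ s.colour ψ f i := (hχ f i).trans (hφψ i _)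
  refine ⟨g.toEmbedding.comp gB, fun f₁ f₂ h₁ h₂ => ?_⟩
  rw [hχψ, hg f₁ f₂ h₁ h₂, ← hχψ]

/-- **Lemma 3.14.** Let `L` have maximum arity `t ≥ 2` and let `M` be ultrahomogeneous with
`Th(M)` having QE. If `M` has the externally definable `ā`-Ramsey property for all
`ā ∈ Age(M)` with `|ā| < t`, then `M` has the externally definable Ramsey property. -/
theorem extDefRamsey_of_small (L : FirstOrder.Language.{u, v}) [L.IsRelational]
    [Countable L.Symbols] (t : ℕ) (ht : 2 ≤ t)
    (harity : ∀ n : ℕ, t < n → IsEmpty (L.Relations n))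
    (M : Type w) [L.Structure M] (hM : L.IsUltrahomogeneous M) (hQE : HasQE L M)
    (h : ∀ (A : Type w) [L.Structure A], Finite A → Nat.card A < t →
      Nonempty (A ↪[L] M) → ExtDefARamsey L M A) :
    ExtDefRamsey L M :=
  extDefRamsey_of_small_general L t ht harity M hM hQE h

end EDRP
end

section
/- Let L be a countable relational language, M an L-structure, and n ≥ 1. If M has FPT_{n+1} (every complete (n+1)-type over M has an Aut(M)-invariant type in the closure of its Aut(M)-orbit), then M has FPT_n. (Lemma 4.3.) -/
open FirstOrder FirstOrder.Language CategoryTheory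

universe u v w

namespace EDRP

private lemma elim_map {α : Type*} {n m : ℕ} (f : Fin (n+1) → α) (g : Fin m → α) :
    Sum.elim f g ∘ Sum.map Fin.castSucc id = Sum.elim (f ∘ Fin.castSucc) g := by
  funext x; cases x <;> simp

/-- **Lemma 4.3.** If `M` has `FPT_{n+1}`, then `M` has `FPT_n`. -/
theorem fptn_of_fptn_succ (L : FirstOrder.Language.{u, v}) [L.IsRelational]
    [Countable L.Symbols] (M : Type w) [L.Structure M]
    (n : ℕ) (hn : 1 ≤ n) (h : FPTn L M (n + 1)) :
    FPTn L M n := by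
  intro N embp bp
  obtain ⟨N', embq, bq', hinv, hcl⟩ := h N embp (Fin.snoc bp (bp ⟨0, hn⟩))
  refine ⟨N', embq, bq' ∘ Fin.castSucc, ?_, ?_⟩
  · intro g m φ mb
    have := hinv g m (φ.relabel (Sum.map Fin.castSucc id)) mb
    simpa [Formula.realize_relabel, elim_map] using this
  · intro m φ mb hφ
    have h2 : (φ.relabel (Sum.map Fin.castSucc id)).Realize
        (Sum.elim bq' fun j => embq (mb j)) := by
      simpa [Formula.realize_relabel, elim_map] using hφ
    obtain ⟨g, hg⟩ := hcl m _ mb h2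
    refine ⟨g, ?_⟩
    have key : ((Fin.snoc bp (bp ⟨0, hn⟩) : Fin (n+1) → N) ∘ Fin.castSucc) = bp := by
      funext i; simp
    simpa [Formula.realize_relabel, elim_map, key] using hg

end EDRP
end

section
/- Let G be a simple graph on a countably infinite vertex set satisfying the witness property: for all disjoint finite sets U, V of vertices there exists a vertex m ∉ U ∪ V adjacent to every vertex of U and to no vertex of V. Then for every partition of the vertex set of G into two sets M₁ ∪ M₂, at least one of the induced subgraphs G[M₁], G[M₂] satisfies the witness property, and hence is isomorphic to G. In particular, the random graph has the pigeonhole property and thus the point-Ramsey property. (Proposition 6.2.) -/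
/-!
If neither `G[S]` nor `G[Sᶜ]` has the witness property, pick failing pairs `(U₁, W₁)` in `S` and
`(U₂, W₂)` in `Sᶜ`. A witness for `(U₁ ∪ U₂, W₁ ∪ W₂)` in `G` lies in `S` or in `Sᶜ`, and there it
witnesses `(U₁, W₁)` or `(U₂, W₂)`, a contradiction.

Two countable graphs with the witness property are isomorphic by back-and-forth: the witness
property extends any finite partial isomorphism to any new vertex on either side, so the finite
partial isomorphisms defined at a given vertex form cofinal sets, and an ideal meeting all of
them (Rasiowa–Sikorski, `Order.idealOfCofinals`) is the graph of an isomorphism.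
-/

universe u

namespace EDRP

/-- A graph `G` has the witness property: for all disjoint finite sets `U`, `V` of vertices
there is a vertex `m` outside `U ∪ V` adjacent to every vertex of `U` and to no vertex of
`V`. -/
def WitnessProp {V : Type u} (G : SimpleGraph V) : Prop :=
  ∀ U W : Finset V, Disjoint U W → ∃ m : V, m ∉ U ∧ m ∉ W ∧
    (∀ u ∈ U, G.Adj m u) ∧ ∀ w ∈ W, ¬ G.Adj m w

section BackAndForth

variable {A B : Type*} {G : SimpleGraph A} {H : SimpleGraph B}

variable (G H) in
/-- A finite set of pairwise compatible pairs is the graph of a partial isomorphism: the first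
conjunct makes it a partial injection. -/
def Compatible (p q : A × B) : Prop :=
  (p.1 = q.1 ↔ p.2 = q.2) ∧ (G.Adj p.1 q.1 ↔ H.Adj p.2 q.2)

lemma compatible_refl (p : A × B) : Compatible G H p p :=
  ⟨iff_of_true rfl rfl, iff_of_false G.irrefl H.irrefl⟩

lemma Compatible.symm {p q : A × B} (h : Compatible G H p q) : Compatible G H q p :=
  ⟨eq_comm.trans (h.1.trans eq_comm), (G.adj_comm _ _).trans (h.2.trans (H.adj_comm _ _))⟩

lemma compatible_swap {p q : A × B} :
    Compatible H G p.swap q.swap ↔ Compatible G H p q :=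
  and_congr Iff.comm Iff.comm

def isoOfCompatible (f : A → B) (g : B → A) (h : ∀ a b, Compatible G H (a, f a) (g b, b)) :
    G ≃g H where
  toFun := f
  invFun := g
  left_inv a := ((h a (f a)).1.2 rfl).symm
  right_inv b := (h (g b) b).1.1 rfl
  map_rel_iff' {a a'} := by
    have hadj : G.Adj a (g (f a')) ↔ H.Adj (f a) (f a') := (h a (f a')).2
    have hgf : g (f a') = a' := ((h a' (f a')).1.2 rfl).symm
    rw [hgf] at hadj
    exact hadj.symm

variable (G H) in
abbrev PartialIso : Type _ :=
  { f : Finset (A × B) // ∀ p ∈ f, ∀ q ∈ f, Compatible G H p q }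

namespace PartialIso

instance : Inhabited (PartialIso G H) := ⟨⟨∅, by simp⟩⟩

section Insert

open Classical

noncomputable def insert (f : PartialIso G H) (p : A × B) (hp : ∀ q ∈ f.1, Compatible G H q p) :
    PartialIso G H :=
  ⟨Insert.insert p f.1, by
    simp only [Finset.mem_insert, forall_eq_or_imp]
    exact ⟨⟨compatible_refl p, fun q hq => (hp q hq).symm⟩, fun q hq => ⟨hp q hq, f.2 q hq⟩⟩⟩

lemma le_insert (f : PartialIso G H) (p : A × B) (hp : ∀ q ∈ f.1, Compatible G H q p) :
    f ≤ f.insert p hp :=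
  Finset.subset_insert _ _

lemma mem_insert_self (f : PartialIso G H) (p : A × B) (hp : ∀ q ∈ f.1, Compatible G H q p) :
    p ∈ (f.insert p hp).1 :=
  Finset.mem_insert_self _ _

end Insert

def symm (f : PartialIso G H) : PartialIso H G :=
  ⟨f.1.map (Equiv.prodComm A B).toEmbedding, by
    simp only [Finset.forall_mem_map]
    exact fun p hp q hq => compatible_swap.2 (f.2 p hp q hq)⟩

lemma swap_mem_symm {f : PartialIso G H} {p : A × B} (hp : p ∈ f.1) : p.swap ∈ f.symm.1 :=
  Finset.mem_map_of_mem _ hp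

/-- If `a` is new, `b` is a witness in `H` for the images of the neighbours and of the
non-neighbours of `a` in the domain of `f`. -/
lemma exists_compatible_left (hH : WitnessProp H) (f : PartialIso G H) (a : A) :
    ∃ b, ∀ q ∈ f.1, Compatible G H q (a, b) := by
  classical
  by_cases hdom : ∃ b, (a, b) ∈ f.1
  · obtain ⟨b, hb⟩ := hdom
    exact ⟨b, fun q hq => f.2 q hq _ hb⟩
  push Not at hdom
  set U := (f.1.filter fun q => G.Adj q.1 a).image Prod.snd
  set W := (f.1.filter fun q => ¬ G.Adj q.1 a).image Prod.snd
  have hUW : Disjoint U W := by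
    simp only [U, W, Finset.disjoint_left, Finset.mem_image, Finset.mem_filter]
    rintro _ ⟨p, ⟨hp, hpa⟩, rfl⟩ ⟨q, ⟨hq, hqa⟩, hqp⟩
    exact hqa ((f.2 q hq p hp).1.2 hqp ▸ hpa)
  obtain ⟨m, hmU, hmW, hU, hW⟩ := hH U W hUW
  have mem_U {q} (hq : q ∈ f.1) (hqa : G.Adj q.1 a) : q.2 ∈ U :=
    Finset.mem_image_of_mem _ (Finset.mem_filter.2 ⟨hq, hqa⟩)
  have mem_W {q} (hq : q ∈ f.1) (hqa : ¬ G.Adj q.1 a) : q.2 ∈ W :=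
    Finset.mem_image_of_mem _ (Finset.mem_filter.2 ⟨hq, hqa⟩)
  refine ⟨m, fun q hq => ⟨iff_of_false ?_ ?_, ?_⟩⟩
  · rintro (h : q.1 = a)
    exact hdom q.2 (h ▸ hq)
  · rintro rfl
    by_cases hqa : G.Adj q.1 a
    exacts [hmU (mem_U hq hqa), hmW (mem_W hq hqa)]
  · rw [H.adj_comm]
    by_cases hqa : G.Adj q.1 a
    exacts [iff_of_true hqa (hU _ (mem_U hq hqa)), iff_of_false hqa (hW _ (mem_W hq hqa))]

lemma exists_compatible_right (hG : WitnessProp G) (f : PartialIso G H) (b : B) :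
    ∃ a, ∀ q ∈ f.1, Compatible G H q (a, b) := by
  obtain ⟨a, ha⟩ := exists_compatible_left hG f.symm b
  exact ⟨a, fun q hq => compatible_swap.1 (ha q.swap (swap_mem_symm hq))⟩

def definedAtLeft (hH : WitnessProp H) (a : A) : Order.Cofinal (PartialIso G H) where
  carrier := {f | ∃ b, (a, b) ∈ f.1}
  isCofinal f := by
    obtain ⟨b, hb⟩ := exists_compatible_left hH f a
    exact ⟨f.insert (a, b) hb, ⟨b, mem_insert_self _ _ _⟩, le_insert _ _ _⟩

def definedAtRight (hG : WitnessProp G) (b : B) : Order.Cofinal (PartialIso G H) where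
  carrier := {f | ∃ a, (a, b) ∈ f.1}
  isCofinal f := by
    obtain ⟨a, ha⟩ := exists_compatible_right hG f b
    exact ⟨f.insert (a, b) ha, ⟨a, mem_insert_self _ _ _⟩, le_insert _ _ _⟩

end PartialIso

open PartialIso in
theorem nonempty_iso_of_witnessProp [Countable A] [Countable B]
    (hG : WitnessProp G) (hH : WitnessProp H) : Nonempty (G ≃g H) := by
  cases nonempty_encodable A
  cases nonempty_encodable B
  let cofinals : A ⊕ B → Order.Cofinal (PartialIso G H) :=
    Sum.elim (definedAtLeft hH) (definedAtRight hG)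
  let I := Order.idealOfCofinals default cofinals
  have total_left (a : A) : ∃ b, ∃ F ∈ I, (a, b) ∈ F.1 := by
    obtain ⟨F, ⟨b, hb⟩, hF⟩ := Order.cofinal_meets_idealOfCofinals default cofinals (.inl a)
    exact ⟨b, F, hF, hb⟩
  have total_right (b : B) : ∃ a, ∃ F ∈ I, (a, b) ∈ F.1 := by
    obtain ⟨F, ⟨a, ha⟩, hF⟩ := Order.cofinal_meets_idealOfCofinals default cofinals (.inr b)
    exact ⟨a, F, hF, ha⟩
  choose f hf using total_left
  choose g hg using total_right
  refine ⟨isoOfCompatible f g fun a b => ?_⟩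
  obtain ⟨F, hF, haF⟩ := hf a
  obtain ⟨F', hF', hbF'⟩ := hg b
  obtain ⟨F'', -, hle, hle'⟩ := I.directed _ hF _ hF'
  exact F''.2 _ (hle haF) _ (hle' hbF')

end BackAndForth

section Pigeonhole

variable {V : Type*} {G : SimpleGraph V}

lemma witnessProp_induce {S : Set V}
    (h : ∀ U W : Finset V, ↑U ⊆ S → ↑W ⊆ S → Disjoint U W →
      ∃ m ∈ S, m ∉ U ∧ m ∉ W ∧ (∀ u ∈ U, G.Adj m u) ∧ ∀ w ∈ W, ¬ G.Adj m w) :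
    WitnessProp (G.induce S) := by
  intro U W hUW
  obtain ⟨m, hmS, hmU, hmW, hU, hW⟩ :=
    h (U.map (.subtype _)) (W.map (.subtype _)) (by simp) (by simp)
      (Finset.disjoint_map _ |>.2 hUW)
  refine ⟨⟨m, hmS⟩, ?_, ?_, fun u hu => ?_, fun w hw => ?_⟩
  · exact fun hm => hmU (Finset.mem_map_of_mem _ hm)
  · exact fun hm => hmW (Finset.mem_map_of_mem _ hm)
  · simpa using hU u (Finset.mem_map_of_mem _ hu)
  · simpa using hW w (Finset.mem_map_of_mem _ hw)

theorem WitnessProp.induce_or_induce_compl (hG : WitnessProp G) (S : Set V) :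
    WitnessProp (G.induce S) ∨ WitnessProp (G.induce Sᶜ) := by
  classical
  by_contra! h
  obtain ⟨h₁, h₂⟩ := h
  replace h₁ := mt witnessProp_induce h₁
  replace h₂ := mt witnessProp_induce h₂
  push Not at h₁ h₂
  obtain ⟨U₁, W₁, hU₁, hW₁, hUW₁, hno₁⟩ := h₁
  obtain ⟨U₂, W₂, hU₂, hW₂, hUW₂, hno₂⟩ := h₂
  have hUW : Disjoint (U₁ ∪ U₂) (W₁ ∪ W₂) := by
    have hU₁W₂ : Disjoint U₁ W₂ :=
      Finset.disjoint_coe.1 (Set.disjoint_of_subset hU₁ hW₂ disjoint_compl_right)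
    have hU₂W₁ : Disjoint U₂ W₁ :=
      Finset.disjoint_coe.1 (Set.disjoint_of_subset hU₂ hW₁ disjoint_compl_left)
    simp only [Finset.disjoint_union_left, Finset.disjoint_union_right]
    exact ⟨⟨hUW₁, hU₂W₁⟩, hU₁W₂, hUW₂⟩
  obtain ⟨m, hmU, hmW, hU, hW⟩ := hG _ _ hUW
  simp only [Finset.mem_union, not_or] at hmU hmW hU hW
  by_cases hmS : m ∈ S
  · obtain ⟨w, hw, hmw⟩ := hno₁ m hmS hmU.1 hmW.1 fun u hu => hU u (.inl hu)
    exact hW w (.inl hw) hmw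
  · obtain ⟨w, hw, hmw⟩ := hno₂ m hmS hmU.2 hmW.2 fun u hu => hU u (.inr hu)
    exact hW w (.inr hw) hmw

end Pigeonhole

theorem random_graph_pigeonhole_general {V : Type u} [Countable V]
    (G : SimpleGraph V) (hG : WitnessProp G) (S : Set V) :
    (WitnessProp (G.induce S) ∧ Nonempty (G.induce S ≃g G)) ∨
      (WitnessProp (G.induce Sᶜ) ∧ Nonempty (G.induce Sᶜ ≃g G)) :=
  (hG.induce_or_induce_compl S).imp (fun h => ⟨h, nonempty_iso_of_witnessProp h hG⟩)
    (fun h => ⟨h, nonempty_iso_of_witnessProp h hG⟩)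

/-- **Proposition 6.2.** If a countably infinite graph `G` has the witness property, then for
every partition `V = S ∪ Sᶜ` of its vertices, the induced subgraph on `S` or on `Sᶜ` has the
witness property, and hence is isomorphic to `G`. (In particular, the random graph has the
pigeonhole property.) -/
theorem random_graph_pigeonhole {V : Type u} [Countable V] [Infinite V]
    (G : SimpleGraph V) (hG : WitnessProp G) (S : Set V) :
    (WitnessProp (G.induce S) ∧ Nonempty (G.induce S ≃g G)) ∨
      (WitnessProp (G.induce Sᶜ) ∧ Nonempty (G.induce Sᶜ ≃g G)) :=
  random_graph_pigeonhole_general G hG S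

end EDRP
end

section
/- Let L be a language consisting of finitely many binary relation symbols, and let M be a countably infinite ultrahomogeneous L-structure with the point-Ramsey property. Then M has the externally definable Ramsey property. (Proposition 6.1.) -/
/-!
Let `χ` be defined by formulas `φᵢ(ē, ȳ)` in an elementary extension `N ⪰ M`. Ultrahomogeneity
of `M` gives the one-point extension property for quantifier-free types; in a finite relational
language this is a set of first-order sentences, so it holds in `N` as well, and there a
back-and-forth induction on formulas shows that the quantifier-free type of a tuple determines
its complete type. Since the language is binary, the quantifier-free type of `(ē, f(ā))` is
determined by those of the pairs `(ē, f(a))`, so `χ(f)` only depends on the colours `c(f(a))` for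
a point colouring `c` of `M` with finitely many colours. The point-Ramsey property, made finitary
by compactness, is applied once for each point type occurring in `B`; this yields a copy of `B`
on which `c(x)` depends only on the point type of `x`, and all copies of `A` inside it then
receive the same colour.
-/

open FirstOrder FirstOrder.Language CategoryTheory

universe u v w

namespace EDRP

/-- `M` has the point-Ramsey property: for every one-element `A` in the age of `M`, every
`k ≥ 1`, every `k`-colouring of the copies of `A` in `M` (not necessarily definable) and every
`B` in the age of `M`, there is a monochromatic copy of `B` in `M`. -/
def PointRamsey (L : FirstOrder.Language.{u, v}) (M : Type w) [L.Structure M] : Prop :=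
  ∀ (A : Type w) [L.Structure A], Finite A → Nat.card A = 1 → Nonempty (A ↪[L] M) →
    ∀ (k : ℕ), 1 ≤ k → ∀ (B : Type w) [L.Structure B], Finite B → Nonempty (B ↪[L] M) →
      ∀ χ : (A ↪[L] M) → Fin k, ∃ g : B ↪[L] M, MonochromaticOn L M A B χ g

open FirstOrder.Language.Structure

variable {L : FirstOrder.Language.{u, v}}

section QFType

variable {γ δ S T : Type*} [L.Structure S] [L.Structure T]

variable (L) in
abbrev QFType (γ : Type*) : Type _ :=
  (γ → γ → Prop) × ((R : Σ n, L.Relations n) → (Fin R.1 → γ) → Prop)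

variable (L) in
def qfType (v : γ → S) : QFType L γ :=
  (fun i j => v i = v j, fun R x => RelMap R.2 (v ∘ x))

theorem qfType_eq_iff {v₁ : γ → S} {v₂ : γ → T} :
    qfType L v₁ = qfType L v₂ ↔ (∀ i j, v₁ i = v₁ j ↔ v₂ i = v₂ j) ∧
      ∀ {n} (R : L.Relations n) (x : Fin n → γ), RelMap R (v₁ ∘ x) ↔ RelMap R (v₂ ∘ x) := by
  simp only [qfType, Prod.ext_iff, funext_iff, eq_iff_iff, Sigma.forall]

theorem qfType_comp_congr {v₁ v₂ : γ → S} (h : qfType L v₁ = qfType L v₂) (f : δ → γ) :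
    qfType L (v₁ ∘ f) = qfType L (v₂ ∘ f) := by
  have hcomp : ∀ v : γ → S, qfType L (v ∘ f) =
      (fun i j => (qfType L v).1 (f i) (f j), fun R x => (qfType L v).2 R (f ∘ x)) :=
    fun _ => rfl
  rw [hcomp, hcomp, h]

theorem qfType_embedding_comp (g : S ↪[L] T) (v : γ → S) : qfType L (g ∘ v) = qfType L v :=
  qfType_eq_iff.2 ⟨fun _ _ => g.injective.eq_iff, fun R x => g.map_rel R (v ∘ x)⟩

end QFType

section ExtensionProperty

variable {γ δ S : Type*} [L.Structure S]

variable (L) in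
def HasExtensionPropertyFor (γ S : Type*) [L.Structure S] : Prop :=
  ∀ (a : S) (v₁ v₂ : γ → S), qfType L v₁ = qfType L v₂ →
    ∃ a' : S, qfType L (fun o : Option γ => o.elim a v₁) =
      qfType L (fun o : Option γ => o.elim a' v₂)

variable (L) in
def HasExtensionProperty (S : Type*) [L.Structure S] : Prop :=
  ∀ n : ℕ, HasExtensionPropertyFor L (Fin n) S

theorem HasExtensionPropertyFor.of_equiv (h : HasExtensionPropertyFor L γ S) (e : γ ≃ δ) :
    HasExtensionPropertyFor L δ S := by
  intro a v₁ v₂ hv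
  obtain ⟨a', ha'⟩ := h a (v₁ ∘ e) (v₂ ∘ e) (qfType_comp_congr hv e)
  refine ⟨a', ?_⟩
  convert qfType_comp_congr ha' (Option.map e.symm) using 2 <;>
    · funext o
      cases o <;> simp

theorem HasExtensionProperty.hasExtensionPropertyFor (h : HasExtensionProperty L S) (γ : Type*)
    [Finite γ] : HasExtensionPropertyFor L γ S :=
  (h _).of_equiv (Finite.equivFin γ).symm

theorem term_exists_eq_var [L.IsRelational] {α : Type*} (t : L.Term α) : ∃ i, t = Term.var i := by
  cases t with
  | var i => exact ⟨i, rfl⟩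
  | func f _ => exact isEmptyElim f

theorem optionElim_comp_sumElim_snoc {β : Type*} {n : ℕ} (v : β → S) (x : Fin n → S) (a : S) :
    (fun o : Option (β ⊕ Fin n) => o.elim a (Sum.elim v x)) ∘
        Sum.elim (some ∘ Sum.inl) (Fin.snoc (some ∘ Sum.inr) none) =
      Sum.elim v (Fin.snoc x a) := by
  rw [Sum.comp_elim, Fin.comp_snoc]
  rfl

theorem realize_iff_of_qfType_eq [L.IsRelational] (hS : HasExtensionProperty L S) {β : Type*}
    [Finite β] {n : ℕ} (φ : L.BoundedFormula β n) {v₁ v₂ : β → S} {x₁ x₂ : Fin n → S}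
    (h : qfType L (Sum.elim v₁ x₁) = qfType L (Sum.elim v₂ x₂)) :
    φ.Realize v₁ x₁ ↔ φ.Realize v₂ x₂ := by
  induction φ generalizing v₁ v₂ with
  | falsum => exact Iff.rfl
  | equal t₁ t₂ =>
    obtain ⟨i, rfl⟩ := term_exists_eq_var t₁
    obtain ⟨j, rfl⟩ := term_exists_eq_var t₂
    exact (qfType_eq_iff.1 h).1 i j
  | rel R ts =>
    choose p hp using fun i => term_exists_eq_var (ts i)
    obtain rfl : ts = fun i => Term.var (p i) := funext hp
    exact (qfType_eq_iff.1 h).2 R p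
  | imp φ ψ ihφ ihψ => exact imp_congr (ihφ h) (ihψ h)
  | all φ ih =>
    suffices ∀ (w₁ w₂ : β → S) (y₁ y₂ : Fin _ → S),
        qfType L (Sum.elim w₁ y₁) = qfType L (Sum.elim w₂ y₂) →
        (∀ a, φ.Realize w₁ (Fin.snoc y₁ a)) → ∀ a, φ.Realize w₂ (Fin.snoc y₂ a) from
      ⟨this _ _ _ _ h, this _ _ _ _ h.symm⟩
    intro w₁ w₂ y₁ y₂ hw hall a₂
    obtain ⟨a₁, ha⟩ := hS.hasExtensionPropertyFor _ a₂ _ _ hw.symm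
    refine (ih ?_).1 (hall a₁)
    have := qfType_comp_congr ha.symm (Sum.elim (some ∘ Sum.inl) (Fin.snoc (some ∘ Sum.inr) none))
    rwa [optionElim_comp_sumElim_snoc, optionElim_comp_sumElim_snoc] at this

theorem realize_formula_iff_of_qfType_eq [L.IsRelational] (hS : HasExtensionProperty L S)
    {β : Type*} [Finite β] (φ : L.Formula β) {v₁ v₂ : β → S}
    (h : qfType L v₁ = qfType L v₂) : φ.Realize v₁ ↔ φ.Realize v₂ := by
  refine realize_iff_of_qfType_eq hS φ ?_
  have hv : ∀ v : β → S, Sum.elim v (default : Fin 0 → S) = v ∘ Sum.elim id finZeroElim := by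
    intro v
    ext (b | i)
    exacts [rfl, i.elim0]
  rw [hv, hv]
  exact qfType_comp_congr h _

end ExtensionProperty

section Sentences

variable [Finite (Σ n, L.Relations n)]

variable (L) in
noncomputable def sameQFType {ι α : Type*} [Finite ι] (p q : ι → α) : L.Formula α :=
  (Formula.iInf fun ij : ι × ι =>
      ((Term.var (p ij.1)).equal (Term.var (p ij.2))).iff
        ((Term.var (q ij.1)).equal (Term.var (q ij.2)))) ⊓
    Formula.iInf fun Rx : Σ R : Σ n, L.Relations n, Fin R.1 → ι =>
      (Rx.1.2.formula fun k => Term.var (p (Rx.2 k))).iff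
        (Rx.1.2.formula fun k => Term.var (q (Rx.2 k)))

theorem realize_sameQFType {ι α S : Type*} [L.Structure S] [Finite ι] {p q : ι → α}
    {w : α → S} : (sameQFType L p q).Realize w ↔ qfType L (w ∘ p) = qfType L (w ∘ q) := by
  simp [sameQFType, qfType_eq_iff, Sigma.forall, Function.comp_def]

variable (L) in
noncomputable def extensionSentence (n : ℕ) : L.Sentence :=
  Formula.iAlls ((Fin n ⊕ Fin n) ⊕ Unit)
    ((sameQFType L (fun i => Sum.inr (Sum.inl (Sum.inl i)))
        (fun i => Sum.inr (Sum.inl (Sum.inr i)))).imp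
      (Formula.iExs Unit (sameQFType L
        (fun o : Option (Fin n) => o.elim (Sum.inl (Sum.inr (Sum.inr ())))
          fun i => Sum.inl (Sum.inr (Sum.inl (Sum.inl i))))
        (fun o : Option (Fin n) => o.elim (Sum.inr ())
          fun i => Sum.inl (Sum.inr (Sum.inl (Sum.inr i)))))))

theorem realize_extensionSentence {S : Type*} [L.Structure S] {n : ℕ} :
    S ⊨ extensionSentence L n ↔ HasExtensionPropertyFor L (Fin n) S := by
  simp only [extensionSentence, Sentence.Realize, Formula.realize_iAlls, Formula.realize_imp,
    Formula.realize_iExs, realize_sameQFType]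
  constructor
  · intro h a v₁ v₂ hv
    obtain ⟨ys, hys⟩ := h (Sum.elim (Sum.elim v₁ v₂) fun _ => a) hv
    refine ⟨ys (), ?_⟩
    convert hys using 2 <;>
    · funext o
      cases o <;> rfl
  · intro h w hw
    obtain ⟨a', ha'⟩ := h (w (Sum.inr ())) _ _ hw
    refine ⟨fun _ => a', ?_⟩
    convert ha' using 2 <;>
    · funext o
      cases o <;> rfl

theorem HasExtensionProperty.of_elementaryEmbedding {M N : Type*} [L.Structure M]
    [L.Structure N] (hM : HasExtensionProperty L M) (f : M ↪ₑ[L] N) :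
    HasExtensionProperty L N := fun n =>
  realize_extensionSentence.1 ((f.map_sentence _).1 (realize_extensionSentence.2 (hM n)))

end Sentences

section Ultrahomogeneous

variable [L.IsRelational] {γ M : Type*} [L.Structure M]

open Substructure in
theorem exists_embedding_closure_range_of_qfType_eq {v₁ v₂ : γ → M}
    (h : qfType L v₁ = qfType L v₂) :
    ∃ F : closure L (Set.range v₁) ↪[L] M, ∀ i, F ⟨v₁ i, subset_closure ⟨i, rfl⟩⟩ = v₂ i := by
  obtain ⟨heq, hrel⟩ := qfType_eq_iff.1 h
  have hsel : ∀ s : closure L (Set.range v₁), ∃ i, v₁ i = s := fun s =>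
    (mem_closure_iff_of_isRelational L (Set.range v₁) s).1 s.2
  choose sel hsel using hsel
  refine ⟨⟨⟨fun s => v₂ (sel s), fun s t hst => ?_⟩, fun f => isEmptyElim f, fun R x => ?_⟩,
    fun i => (heq _ i).1 (hsel _)⟩
  · have := (heq (sel s) (sel t)).2 hst
    rw [hsel, hsel] at this
    exact Subtype.ext this
  · have hx : v₁ ∘ (sel ∘ x) = fun k => (x k : M) := funext fun k => hsel (x k)
    exact (hrel R (sel ∘ x)).symm.trans (hx ▸ Iff.rfl)

theorem HasExtensionProperty.of_isUltrahomogeneous (hM : L.IsUltrahomogeneous M) :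
    HasExtensionProperty L M := by
  intro n a v₁ v₂ hv
  obtain ⟨F, hF⟩ := exists_embedding_closure_range_of_qfType_eq hv
  obtain ⟨g, hg⟩ := hM _ (Substructure.fg_closure (Set.finite_range v₁)) F
  refine ⟨g a, ?_⟩
  have hga : (fun o : Option (Fin n) => o.elim (g a) v₂) =
      g.toEmbedding ∘ fun o => o.elim a v₁ := by
    funext o
    cases o with
    | none => rfl
    | some i => exact (hF i).symm.trans (by rw [hg]; rfl)
  rw [hga, qfType_embedding_comp]

end Ultrahomogeneous

section Binary

variable {γ ι α S : Type*} [L.Structure S]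

theorem qfType_eq_of_forall_pair (hbin : ∀ n : ℕ, n ≠ 2 → IsEmpty (L.Relations n))
    {u₁ u₂ : γ → S} (h : ∀ i j, qfType L (u₁ ∘ ![i, j]) = qfType L (u₂ ∘ ![i, j])) :
    qfType L u₁ = qfType L u₂ := by
  refine qfType_eq_iff.2 ⟨fun i j => (qfType_eq_iff.1 (h i j)).1 0 1, fun {n} R x => ?_⟩
  rcases eq_or_ne n 2 with rfl | hn
  · have hx : ![x 0, x 1] = x := by ext k; fin_cases k <;> rfl
    have := (qfType_eq_iff.1 (h (x 0) (x 1))).2 R id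
    rwa [Function.comp_id, Function.comp_id, hx] at this
  · exact (hbin n hn).elim R

theorem qfType_sumElim_eq (hbin : ∀ n : ℕ, n ≠ 2 → IsEmpty (L.Relations n)) {e : ι → S}
    {w₁ w₂ : α → S} (hw : qfType L w₁ = qfType L w₂)
    (he : ∀ a, qfType L (Sum.elim e fun _ : Unit => w₁ a) =
      qfType L (Sum.elim e fun _ : Unit => w₂ a)) :
    qfType L (Sum.elim e w₁) = qfType L (Sum.elim e w₂) := by
  refine qfType_eq_of_forall_pair hbin ?_
  rintro (l | a) (l' | a')
  · exact congrArg (qfType L) (by ext k; fin_cases k <;> rfl)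
  · have hf : ∀ w : α → S, Sum.elim e w ∘ ![.inl l, .inr a'] =
        Sum.elim e (fun _ : Unit => w a') ∘ ![.inl l, .inr ()] := by
      intro w; ext k; fin_cases k <;> rfl
    rw [hf, hf]
    exact qfType_comp_congr (he a') _
  · have hf : ∀ w : α → S, Sum.elim e w ∘ ![.inr a, .inl l'] =
        Sum.elim e (fun _ : Unit => w a) ∘ ![.inr (), .inl l'] := by
      intro w; ext k; fin_cases k <;> rfl
    rw [hf, hf]
    exact qfType_comp_congr (he a) _
  · have hf : ∀ w : α → S, Sum.elim e w ∘ ![.inr a, .inr a'] = w ∘ ![a, a'] := by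
      intro w; ext k; fin_cases k <;> rfl
    rw [hf, hf]
    exact qfType_comp_congr hw _

end Binary

theorem ExtDefinableBy.exists_pointColouring [L.IsRelational] [Finite (Σ n, L.Relations n)]
    (hbin : ∀ n : ℕ, n ≠ 2 → IsEmpty (L.Relations n)) {M A : Type w} [L.Structure M]
    [L.Structure A] [Finite A] (hM : L.IsUltrahomogeneous M) {k e : ℕ}
    {φ : Fin k → L.Formula (Fin e ⊕ A)} {χ : (A ↪[L] M) → Fin k} (h : ExtDefinableBy L M A φ χ) :
    ∃ c : M → QFType L (Fin e ⊕ Unit),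
      ∀ f₁ f₂ : A ↪[L] M, (∀ a, c (f₁ a) = c (f₂ a)) → χ f₁ = χ f₂ := by
  obtain ⟨N, emb, eb, hχ⟩ := h
  refine ⟨fun x => qfType L (Sum.elim eb fun _ : Unit => emb x), fun f₁ f₂ hc => ?_⟩
  have hN : HasExtensionProperty L N :=
    (HasExtensionProperty.of_isUltrahomogeneous hM).of_elementaryEmbedding emb
  have hf : qfType L (emb ∘ f₁) = qfType L (emb ∘ f₂) :=
    calc qfType L (emb ∘ f₁) = qfType L (f₁ ∘ id) := qfType_embedding_comp emb.toEmbedding f₁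
      _ = qfType L (f₂ ∘ id) := by rw [qfType_embedding_comp, qfType_embedding_comp]
      _ = qfType L (emb ∘ f₂) := (qfType_embedding_comp emb.toEmbedding f₂).symm
  have hrealize := realize_formula_iff_of_qfType_eq hN (φ (χ f₁)) (qfType_sumElim_eq hbin hf hc)
  exact ((hχ f₂ _).2 (hrealize.1 ((hχ f₁ _).1 rfl))).symm

theorem exists_finset_of_forall_colouring {X ι κ : Type*} [Finite κ] {R : ι → Set X}
    (hR : ∀ i, (R i).Finite) {Q : (X → κ) → ι → Prop}
    (hQ : ∀ c c' i, Set.EqOn c c' (R i) → Q c i → Q c' i) (h : ∀ c, ∃ i, Q c i) :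
    ∃ S : Finset X, ∀ c, ∃ i, R i ⊆ S ∧ Q c i := by
  classical
  let _ : TopologicalSpace κ := ⊥
  have : DiscreteTopology κ := ⟨rfl⟩
  have hopen : ∀ i, IsOpen {c | Q c i} := fun i => isOpen_iff_forall_mem_open.2 fun c hc =>
    ⟨(R i).pi fun x => {c x}, fun c' hc' => hQ c c' i (fun x hx => (hc' x hx).symm) hc,
      isOpen_set_pi (hR i) fun _ _ => isOpen_discrete _, fun x _ => rfl⟩
  obtain ⟨t, ht⟩ := isCompact_univ.elim_finite_subcover _ hopen
    fun c _ => Set.mem_iUnion.2 (h c)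
  refine ⟨t.biUnion fun i => (hR i).toFinset, fun c => ?_⟩
  obtain ⟨i, hi, hc⟩ := Set.mem_iUnion₂.1 (ht (Set.mem_univ c))
  refine ⟨i, fun x hx => ?_, hc⟩
  simp only [Finset.coe_biUnion, Set.Finite.coe_toFinset, Set.mem_iUnion]
  exact ⟨i, hi, hx⟩

section PointTypes

variable (L) in
def pointType {M : Type*} [L.Structure M] (x : M) : Set (Σ n, L.Relations n) :=
  {R | RelMap R.2 fun _ => x}

theorem pointType_embedding_apply {M N : Type*} [L.Structure M] [L.Structure N] (f : M ↪[L] N)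
    (x : M) : pointType L (f x) = pointType L x :=
  Set.ext fun R => f.map_rel R.2 fun _ => x

variable (L) in
def PointStructure (_p : Set (Σ n, L.Relations n)) : Type w := PUnit

namespace PointStructure

variable {p : Set (Σ n, L.Relations n)}

instance : Unique (PointStructure.{u, v, w} L p) := inferInstanceAs (Unique PUnit)

instance : L.Structure (PointStructure.{u, v, w} L p) where
  funMap _ _ := default
  RelMap R _ := ⟨_, R⟩ ∈ p

def embedding [L.IsRelational] {M : Type*} [L.Structure M] (x : M) (hx : pointType L x = p) :
    PointStructure.{u, v, w} L p ↪[L] M where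
  toFun _ := x
  inj' _ _ _ := Subsingleton.elim _ _
  map_fun' f := isEmptyElim f
  map_rel' R _ := by subst hx; exact Iff.rfl

end PointStructure

end PointTypes

section Arrows

variable (L) in
/-- The arrow relation `E → (D)^1_κ`, restricted to the point types in `P`. -/
def Arrows (κ E D : Type*) [L.Structure E] [L.Structure D] (P : Set (Set (Σ n, L.Relations n))) :
    Prop :=
  ∀ c : E → κ, ∃ g : D ↪[L] E, ∀ d₁ d₂ : D, pointType L d₁ = pointType L d₂ →
    pointType L d₁ ∈ P → c (g d₁) = c (g d₂)

variable {κ C D E M : Type*} [L.Structure C] [L.Structure D] [L.Structure E] [L.Structure M]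
  {P Q : Set (Set (Σ n, L.Relations n))}

theorem arrows_empty (h : Nonempty (D ↪[L] E)) : Arrows L κ E D ∅ := fun _ =>
  h.elim fun g => ⟨g, fun _ _ _ h => h.elim⟩

theorem Arrows.trans (hED : Arrows L κ E D Q) (hDC : Arrows L κ D C P) :
    Arrows L κ E C (Q ∪ P) := by
  intro c
  obtain ⟨h, hh⟩ := hED c
  obtain ⟨g, hg⟩ := hDC (c ∘ h)
  refine ⟨h.comp g, fun d₁ d₂ hd hmem => hmem.elim (fun hQ => ?_) (hg d₁ d₂ hd)⟩
  refine hh (g d₁) (g d₂) ?_ ?_ <;> rw [pointType_embedding_apply]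
  · rw [pointType_embedding_apply, hd]
  · exact hQ

theorem Arrows.exists_finite_substructure [L.IsRelational] [Finite D] [Nonempty κ] [Finite κ]
    (h : Arrows L κ M D P) : ∃ S : L.Substructure M, Finite S ∧ Arrows L κ S D P := by
  classical
  obtain ⟨S, hS⟩ := exists_finset_of_forall_colouring
    (R := fun g : D ↪[L] M => Set.range g) (fun _ => Set.finite_range _)
    (Q := fun c g => ∀ d₁ d₂ : D, pointType L d₁ = pointType L d₂ →
      pointType L d₁ ∈ P → c (g d₁) = c (g d₂))
    (fun c c' g hcc' hc d₁ d₂ hd hp => by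
      rw [← hcc' ⟨d₁, rfl⟩, ← hcc' ⟨d₂, rfl⟩]
      exact hc d₁ d₂ hd hp) h
  set T : L.Substructure M := Substructure.closure L (S : Set M)
  refine ⟨T, (Substructure.fg_closure S.finite_toSet).finite, fun c => ?_⟩
  obtain ⟨g, hgS, hg⟩ := hS fun x => if hx : x ∈ T then c ⟨x, hx⟩ else Classical.arbitrary κ
  have hmem : ∀ d, g d ∈ T := fun d => Substructure.subset_closure (hgS ⟨d, rfl⟩)
  refine ⟨g.codRestrict _ hmem, fun d₁ d₂ hd hp => ?_⟩
  have := hg d₁ d₂ hd hp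
  rwa [dif_pos (hmem d₁), dif_pos (hmem d₂)] at this

end Arrows

section PointRamsey

variable [L.IsRelational] {M : Type w} [L.Structure M] {κ : Type*} [Finite κ] [Nonempty κ]

theorem PointRamsey.arrows_singleton (hpt : PointRamsey L M) {D : Type w} [L.Structure D]
    [Finite D] (hD : Nonempty (D ↪[L] M)) {p : Set (Σ n, L.Relations n)}
    (hp : ∃ x : M, pointType L x = p) : Arrows L κ M D {p} := by
  intro c
  obtain ⟨x, hx⟩ := hp
  obtain ⟨g, hg⟩ := hpt (PointStructure L p) inferInstance Nat.card_unique
    ⟨PointStructure.embedding x hx⟩ _ Nat.card_pos D inferInstance hD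
    fun f => Finite.equivFin κ (c (f default))
  refine ⟨g, fun d₁ d₂ hd (hp : pointType L d₁ = p) => (Finite.equivFin κ).injective ?_⟩
  have h₁ : pointType L (g d₁) = p := (pointType_embedding_apply g d₁).trans hp
  have h₂ : pointType L (g d₂) = p := (pointType_embedding_apply g d₂).trans (hd ▸ hp)
  exact hg (PointStructure.embedding _ h₁) (PointStructure.embedding _ h₂)
    (Set.range_subset_iff.2 fun _ => ⟨d₁, rfl⟩) (Set.range_subset_iff.2 fun _ => ⟨d₂, rfl⟩)

theorem PointRamsey.exists_arrows (hpt : PointRamsey L M) {C : Type w} [L.Structure C] [Finite C]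
    (hC : Nonempty (C ↪[L] M)) {P : Set (Set (Σ n, L.Relations n))} (hP : P.Finite)
    (hPM : ∀ p ∈ P, ∃ x : M, pointType L x = p) :
    ∃ S : L.Substructure M, Finite S ∧ Arrows L κ S C P := by
  induction P, hP using Set.Finite.induction_on with
  | empty => exact (arrows_empty hC).exists_finite_substructure
  | @insert p P _ _ ih =>
    obtain ⟨S, hS, hSC⟩ := ih fun q hq => hPM q (Set.mem_insert_of_mem p hq)
    obtain ⟨T, hT, hTS⟩ := (hpt.arrows_singleton (κ := κ) ⟨S.subtype⟩
      (hPM p (Set.mem_insert p P))).exists_finite_substructure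
    exact ⟨T, hT, Set.insert_eq p P ▸ hTS.trans hSC⟩

theorem PointRamsey.exists_embedding_colour_eq_of_pointType_eq (hpt : PointRamsey L M)
    (c : M → κ) {B : Type w} [L.Structure B] [Finite B] (hB : Nonempty (B ↪[L] M)) :
    ∃ g : B ↪[L] M, ∀ b₁ b₂ : B, pointType L b₁ = pointType L b₂ → c (g b₁) = c (g b₂) := by
  obtain ⟨g₀⟩ := hB
  obtain ⟨S, -, hS⟩ := hpt.exists_arrows (κ := κ) ⟨g₀⟩ (Set.finite_range (pointType L))
    (by rintro _ ⟨b, rfl⟩; exact ⟨g₀ b, pointType_embedding_apply g₀ b⟩)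
  obtain ⟨g, hg⟩ := hS (c ∘ S.subtype)
  exact ⟨S.subtype.comp g, fun b₁ b₂ hb => hg b₁ b₂ hb ⟨b₁, rfl⟩⟩

end PointRamsey

theorem finite_relations_of_binary (hbin : ∀ n : ℕ, n ≠ 2 → IsEmpty (L.Relations n))
    [Finite (L.Relations 2)] : Finite (Σ n, L.Relations n) := by
  refine Finite.of_surjective (fun R : L.Relations 2 => (⟨2, R⟩ : Σ n, L.Relations n)) ?_
  rintro ⟨n, R⟩
  rcases eq_or_ne n 2 with rfl | hn
  · exact ⟨R, rfl⟩
  · exact (hbin n hn).elim R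

theorem extDefRamsey_of_pointRamsey_binary_general (L : FirstOrder.Language.{u, v}) [L.IsRelational]
    (hbin : ∀ n : ℕ, n ≠ 2 → IsEmpty (L.Relations n)) (hfin : Finite (L.Relations 2))
    (M : Type w) [L.Structure M]
    (hM : L.IsUltrahomogeneous M) (hpt : PointRamsey L M) :
    ExtDefRamsey L M := by
  have : Finite (Σ n, L.Relations n) := finite_relations_of_binary hbin
  intro A _ _ _ k _ B _ _ hB χ ⟨e, φ, hχ⟩
  obtain ⟨c, hc⟩ := hχ.exists_pointColouring hbin hM
  obtain ⟨g, hg⟩ := hpt.exists_embedding_colour_eq_of_pointType_eq c hB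
  refine ⟨g, fun f₁ f₂ h₁ h₂ => hc f₁ f₂ fun a => ?_⟩
  obtain ⟨b₁, hb₁⟩ := h₁ ⟨a, rfl⟩
  obtain ⟨b₂, hb₂⟩ := h₂ ⟨a, rfl⟩
  rw [← hb₁, ← hb₂]
  refine hg b₁ b₂ ?_
  calc pointType L b₁ = pointType L (f₁ a) := by rw [← hb₁, pointType_embedding_apply]
    _ = pointType L (f₂ a) := by rw [pointType_embedding_apply, pointType_embedding_apply]
    _ = pointType L b₂ := by rw [← hb₂, pointType_embedding_apply]

/-- **Proposition 6.1.** A countably infinite ultrahomogeneous structure in a language with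
finitely many relation symbols, all binary, which has the point-Ramsey property, has the
externally definable Ramsey property. -/
theorem extDefRamsey_of_pointRamsey_binary (L : FirstOrder.Language.{u, v}) [L.IsRelational]
    (hbin : ∀ n : ℕ, n ≠ 2 → IsEmpty (L.Relations n)) (hfin : Finite (L.Relations 2))
    (M : Type w) [L.Structure M] [Countable M] [Infinite M]
    (hM : L.IsUltrahomogeneous M) (hpt : PointRamsey L M) :
    ExtDefRamsey L M :=
  extDefRamsey_of_pointRamsey_binary_general L hbin hfin M hM hpt

end EDRP
end
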